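/- arXiv:1008.1348 — 6 statements merged into one kernel-verified Lean document; each statement's English description precedes it below -/
import Mathlib

section
/- A partially symmetric polynomial p(x_1,...,x_a, y_1,...,y_b), symmetric separately in the x-variables and in the y-variables, is supersymmetric (i.e. the substitution x_1 = t = y_1 yields a polynomial independent of t) for every elementary supersymmetric polynomial e_j(x,y) = ∑_{s=0}^{j} (-1)^s h_{j-s}(x) e_s(y). -/
/-!
Put `x₁ = y₁ = t` and write `h'_m`, `e'_s` for `h_m`, `e_s` in the remaining variables. Then
`h_{m+1} = t h_m + h'_{m+1}` and `e_{s+1} = e'_{s+1} + t e'_s`, i.e. in generating functions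
`∑ h_m u^m = (1 - t u)⁻¹ ∑ h'_m u^m` and `∑ e_s (-u)^s = (1 - t u) ∑ e'_s (-u)^s`. The factors
`1 - t u` cancel in the product, whose coefficients are the `e_j(x, y)`; hence `e_j(x, y)` takes
the same value as at `x₁ = y₁ = 0`.
-/

open MvPolynomial

noncomputable section

/-- The `j`-th elementary supersymmetric polynomial
`e_j(x,y) = ∑_{s=0}^{j} (-1)^s h_{j-s}(x) e_s(y)` in the variables
`x_1,…,x_a` (the `Sum.inl` variables) and `y_1,…,y_b` (the `Sum.inr` variables). -/
noncomputable def superElem (a b j : ℕ) : MvPolynomial (Fin a ⊕ Fin b) ℚ :=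
  ∑ s ∈ Finset.range (j + 1),
    (-1 : MvPolynomial (Fin a ⊕ Fin b) ℚ) ^ s *
      rename Sum.inl (hsymm (Fin a) ℚ (j - s)) * rename Sum.inr (esymm (Fin b) ℚ s)

section UpdateRecursions

variable {σ R A : Type*} [Fintype σ] [DecidableEq σ] [CommSemiring R] [CommSemiring A]
  [Algebra R A]

theorem MvPolynomial.aeval_hsymm (f : σ → A) (n : ℕ) :
    aeval f (hsymm σ R n) = ∑ μ : Sym σ n, ((μ : Multiset σ).map f).prod := by
  simp [hsymm, map_multiset_prod, Multiset.map_map]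

theorem Sym.sum_filter_mem_prod_map (f : σ → A) (i : σ) (n : ℕ) :
    ∑ μ : Sym σ (n + 1) with i ∈ μ, ((μ : Multiset σ).map f).prod =
      f i * ∑ ν : Sym σ n, ((ν : Multiset σ).map f).prod := by
  rw [Finset.mul_sum]
  refine Finset.sum_bij' (fun μ hμ => μ.erase i (Finset.mem_filter.mp hμ).2) (fun ν _ => i ::ₛ ν)
    (by simp) (by simp) (fun μ _ => Sym.cons_erase _) (fun ν _ => Sym.erase_cons_head _ _ _)
    fun μ hμ => (Multiset.prod_map_erase (Finset.mem_filter.mp hμ).2).symm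

theorem MvPolynomial.aeval_hsymm_succ (f : σ → A) (i : σ) (n : ℕ) :
    aeval f (hsymm σ R (n + 1)) =
      f i * aeval f (hsymm σ R n) + aeval (Function.update f i 0) (hsymm σ R (n + 1)) := by
  simp only [aeval_hsymm, ← Sym.sum_filter_mem_prod_map]
  refine (Finset.sum_filter_add_sum_filter_not _ (i ∈ ·) _).symm.trans (congrArg _ ?_)
  rw [Finset.sum_filter]
  refine Finset.sum_congr rfl fun μ _ => ?_
  split_ifs with hi
  · exact (Multiset.prod_eq_zero (Multiset.mem_map.mpr ⟨i, hi, by simp⟩)).symm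
  · refine congrArg _ (Multiset.map_congr rfl fun k hk => ?_)
    exact (Function.update_of_ne (by rintro rfl; exact hi hk) _ _).symm

theorem Multiset.esymm_cons_succ (a : A) (s : Multiset A) (n : ℕ) :
    (a ::ₘ s).esymm (n + 1) = s.esymm (n + 1) + a * s.esymm n := by
  simp [Multiset.esymm, Multiset.powersetCard_cons, Multiset.sum_map_mul_left, Multiset.map_map]

theorem Multiset.esymm_zero_cons (s : Multiset A) (n : ℕ) :
    ((0 : A) ::ₘ s).esymm n = s.esymm n := by
  cases n <;> simp [Multiset.esymm]

theorem MvPolynomial.aeval_esymm_succ (f : σ → A) (i : σ) (n : ℕ) :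
    aeval f (esymm σ R (n + 1)) =
      aeval (Function.update f i 0) (esymm σ R (n + 1)) +
        f i * aeval (Function.update f i 0) (esymm σ R n) := by
  have hsplit : Finset.univ.val = i ::ₘ (Finset.univ.erase i).val := by simp
  have hrest : (Finset.univ.erase i).val.map (Function.update f i 0) =
      (Finset.univ.erase i).val.map f :=
    Multiset.map_congr rfl fun k hk => Function.update_of_ne (Finset.ne_of_mem_erase hk) _ _
  rw [aeval_esymm_eq_multiset_esymm, aeval_esymm_eq_multiset_esymm,
    aeval_esymm_eq_multiset_esymm, hsplit, Multiset.map_cons, Multiset.map_cons, hrest,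
    Function.update_self, Multiset.esymm_zero_cons, Multiset.esymm_zero_cons,
    Multiset.esymm_cons_succ]

end UpdateRecursions

section Convolution

variable {A : Type*} [CommRing A]

theorem sum_range_neg_one_pow_mul_eq_of_recurrence (t : A) {H E h e : ℕ → A}
    (hH₀ : H 0 = h 0) (hH : ∀ m, H (m + 1) = t * H m + h (m + 1))
    (hE₀ : E 0 = e 0) (hE : ∀ s, E (s + 1) = e (s + 1) + t * e s) (j : ℕ) :
    ∑ s ∈ Finset.range (j + 1), (-1) ^ s * H (j - s) * E s =
      ∑ s ∈ Finset.range (j + 1), (-1) ^ s * h (j - s) * e s := by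
  have coeff_eq (F G : ℕ → A) : PowerSeries.coeff j (.mk (fun s => (-1) ^ s * G s) * .mk F) =
      ∑ s ∈ Finset.range (j + 1), (-1) ^ s * F (j - s) * G s := by
    rw [PowerSeries.coeff_mul, Finset.Nat.sum_antidiagonal_eq_sum_range_succ_mk]
    simp only [PowerSeries.coeff_mk, mul_right_comm]
  let u : PowerSeries A := 1 - PowerSeries.C t * PowerSeries.X
  have hH_ser : u * .mk H = .mk h := by
    ext (_ | m) <;> simp [u, sub_mul, mul_assoc, hH₀, hH]
  have hE_ser : PowerSeries.mk (fun s => (-1) ^ s * E s) =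
      u * .mk (fun s => (-1) ^ s * e s) := by
    ext (_ | s) <;> simp [u, sub_mul, mul_assoc, hE₀, hE, pow_succ]; ring
  rw [← coeff_eq, ← coeff_eq, hE_ser, ← hH_ser, mul_comm u, mul_assoc]

end Convolution

theorem aeval_superElem_eq_update_zero {A : Type*} [CommRing A] [Algebra ℚ A] {a b : ℕ}
    (f : Fin a ⊕ Fin b → A) {i : Fin a} {k : Fin b} (hf : f (.inl i) = f (.inr k)) (j : ℕ) :
    aeval f (superElem a b j) =
      aeval (Function.update (Function.update f (.inl i) 0) (.inr k) 0) (superElem a b j) := by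
  simp only [superElem, map_sum, map_mul, map_pow, map_neg, map_one, aeval_rename,
    Sum.update_inr_comp_inl, Sum.update_inl_comp_inl, Sum.update_inr_comp_inr,
    Sum.update_inl_comp_inr]
  refine sum_range_neg_one_pow_mul_eq_of_recurrence (f (.inl i))
    (H := fun m => aeval (f ∘ Sum.inl) (hsymm (Fin a) ℚ m))
    (E := fun s => aeval (f ∘ Sum.inr) (esymm (Fin b) ℚ s))
    (h := fun m => aeval (Function.update (f ∘ Sum.inl) i 0) (hsymm (Fin a) ℚ m))
    (e := fun s => aeval (Function.update (f ∘ Sum.inr) k 0) (esymm (Fin b) ℚ s))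
    (by simp [hsymm_zero]) (fun m => aeval_hsymm_succ _ i m) (by simp [esymm_zero])
    (fun s => by rw [aeval_esymm_succ _ k s, Function.comp_apply, hf]) j

/-- Every elementary supersymmetric polynomial `e_j(x,y)` is supersymmetric:
substituting `x_1 = t = y_1` (here `t` is the variable of the outer `Polynomial` ring)
yields a polynomial independent of `t`, i.e. a constant polynomial in `t`. -/
theorem superElem_supersymmetric (a b j : ℕ) (ha : 0 < a) (hb : 0 < b) :
    ∃ c : MvPolynomial (Fin a ⊕ Fin b) ℚ,
      aeval (fun v : Fin a ⊕ Fin b =>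
          match v with
          | Sum.inl i => if i = (⟨0, ha⟩ : Fin a) then Polynomial.X
              else Polynomial.C (X (Sum.inl i))
          | Sum.inr i => if i = (⟨0, hb⟩ : Fin b) then Polynomial.X
              else Polynomial.C (X (Sum.inr i)))
        (superElem a b j) = Polynomial.C c := by
  refine ⟨aeval (Function.update (Function.update X (.inl ⟨0, ha⟩) 0) (.inr ⟨0, hb⟩) 0)
    (superElem a b j), ?_⟩
  rw [aeval_superElem_eq_update_zero _ (i := ⟨0, ha⟩) (k := ⟨0, hb⟩) (by simp) j,
    ← Polynomial.algebraMap_eq, ← aeval_algebraMap_apply]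
  refine congrArg (aeval · (superElem a b j)) (funext fun v => ?_)
  rcases v with i | i <;> simp only [Function.comp_apply, Function.update_apply] <;>
    split_ifs <;> simp_all
end
end

section
/- For any k ∈ ℕ, the assignment 1_λ ↦ 1_{λ - (k,k,...,k)} (interpreting 1_μ = 0 when μ ∉ Λ(n,d)) and E_{±i} ↦ E_{±i} defines a well-defined surjective algebra homomorphism π : Ṡ(n, d+nk) → Ṡ(n,d). -/
/-! Subtracting `(kⁿ)` sends each weight of `Λ(n, d + nk)` either into `Λ(n, d)` or out of `ℕⁿ`,
where `1_μ = 0`, and `μ ↦ μ + (kⁿ)` inverts it on `Λ(n, d)`. It preserves `λ_i - λ_{i+1}` and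
commutes with the shifts by `α_i`, so `1_λ ↦ 1_{λ - (kⁿ)}`, `E_{±i} ↦ E_{±i}` respects every
defining relation of `Ṡ(n, d + nk)`; it is onto because `1_λ` is the image of `1_{λ + (kⁿ)}`. -/

noncomputable section

/-- The ground field `ℚ(q)`. -/
abbrev Fq : Type := RatFunc ℚ

/-- The formal parameter `q`. -/
noncomputable def qv : Fq := RatFunc.X

/-- The quantum integer `[a] = (q^a - q^{-a})/(q - q⁻¹)`. -/
noncomputable def qint (a : ℤ) : Fq := (qv ^ a - qv ^ (-a)) / (qv - qv⁻¹)

/-- `Λ(n,d) = {λ ∈ ℕⁿ : ∑ λ_i = d}`, realized as a finite set of `ℤ`-valued weights. -/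
def lamFinset (n d : ℕ) : Finset (Fin n → ℤ) :=
  ((Finset.univ : Finset (Fin n → Fin (d + 1))).image fun f j => ((f j : ℕ) : ℤ)).filter
    fun l => ∑ j, l j = (d : ℤ)

/-- The `i`-th coordinate, for `i = 1, …, n-1` (`0`-indexed). -/
def loIdx {n : ℕ} (i : Fin (n - 1)) : Fin n := ⟨i.1, by have := i.isLt; omega⟩

/-- The `(i+1)`-st coordinate. -/
def hiIdx {n : ℕ} (i : Fin (n - 1)) : Fin n := ⟨i.1 + 1, by have := i.isLt; omega⟩

/-- The simple root `α_i = ε_i - ε_{i+1}`. -/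
def alphaWt {n : ℕ} (i : Fin (n - 1)) : Fin n → ℤ :=
  fun j => if j = loIdx i then 1 else if j = hiIdx i then -1 else 0

/-- Generators of the idempotented `q`-Schur algebra `Ṡ(n,d)`:
idempotents `1_λ` for each weight `λ` and the `E_{±i}`. -/
inductive QGen (n : ℕ) : Type
  | wt : (Fin n → ℤ) → QGen n
  | up : Fin (n - 1) → QGen n
  | dn : Fin (n - 1) → QGen n

/-- The generator `1_λ` in the free algebra. -/
noncomputable def eF {n : ℕ} (l : Fin n → ℤ) : FreeAlgebra Fq (QGen n) :=
  FreeAlgebra.ι Fq (QGen.wt l)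

/-- The generator `E_{+i}` in the free algebra. -/
noncomputable def epF {n : ℕ} (i : Fin (n - 1)) : FreeAlgebra Fq (QGen n) :=
  FreeAlgebra.ι Fq (QGen.up i)

/-- The generator `E_{-i}` in the free algebra. -/
noncomputable def emF {n : ℕ} (i : Fin (n - 1)) : FreeAlgebra Fq (QGen n) :=
  FreeAlgebra.ι Fq (QGen.dn i)

/-- The defining relations of `Ṡ(n,d)`:  `1_λ 1_μ = δ_{λμ} 1_λ`, `∑_{λ ∈ Λ(n,d)} 1_λ = 1`,
`1_μ = 0` for `μ ∉ Λ(n,d)`, `E_{±i} 1_λ = 1_{λ ± α_i} E_{±i}` and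
`E_i E_{-j} - E_{-j} E_i = δ_{ij} ∑_{λ ∈ Λ(n,d)} [λ_i - λ_{i+1}] 1_λ`. -/
inductive QSRel (n d : ℕ) : FreeAlgebra Fq (QGen n) → FreeAlgebra Fq (QGen n) → Prop
  | orth (l m : Fin n → ℤ) : QSRel n d (eF l * eF m) (if l = m then eF l else 0)
  | unit : QSRel n d (∑ l ∈ lamFinset n d, eF l) 1
  | zero (l : Fin n → ℤ) (h : l ∉ lamFinset n d) : QSRel n d (eF l) 0
  | upComm (i : Fin (n - 1)) (l : Fin n → ℤ) :
      QSRel n d (epF i * eF l) (eF (l + alphaWt i) * epF i)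
  | dnComm (i : Fin (n - 1)) (l : Fin n → ℤ) :
      QSRel n d (emF i * eF l) (eF (l - alphaWt i) * emF i)
  | commutator (i j : Fin (n - 1)) :
      QSRel n d (epF i * emF j - emF j * epF i)
        (if i = j then ∑ l ∈ lamFinset n d, qint (l (loIdx i) - l (hiIdx i)) • eF l else 0)

/-- The idempotented `q`-Schur algebra `Ṡ(n,d)`, presented by generators and relations. -/
abbrev QSchur (n d : ℕ) : Type := RingQuot (QSRel n d)

/-- The idempotent `1_λ ∈ Ṡ(n,d)`. -/
noncomputable def qe {n d : ℕ} (l : Fin n → ℤ) : QSchur n d :=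
  RingQuot.mkAlgHom Fq (QSRel n d) (eF l)

/-- The generator `E_{+i} ∈ Ṡ(n,d)`. -/
noncomputable def qep {n d : ℕ} (i : Fin (n - 1)) : QSchur n d :=
  RingQuot.mkAlgHom Fq (QSRel n d) (epF i)

/-- The generator `E_{-i} ∈ Ṡ(n,d)`. -/
noncomputable def qem {n d : ℕ} (i : Fin (n - 1)) : QSchur n d :=
  RingQuot.mkAlgHom Fq (QSRel n d) (emF i)

lemma mem_lamFinset {n d : ℕ} {l : Fin n → ℤ} :
    l ∈ lamFinset n d ↔ (∀ j, 0 ≤ l j) ∧ ∑ j, l j = (d : ℤ) := by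
  simp only [lamFinset, Finset.mem_filter, Finset.mem_image, Finset.mem_univ, true_and]
  constructor
  · rintro ⟨⟨f, rfl⟩, hsum⟩
    exact ⟨fun j => Int.natCast_nonneg _, hsum⟩
  · rintro ⟨hnonneg, hsum⟩
    refine ⟨⟨fun j => ⟨(l j).toNat, ?_⟩, ?_⟩, hsum⟩
    · have hle : l j ≤ ∑ i, l i :=
        Finset.single_le_sum (fun i _ => hnonneg i) (Finset.mem_univ j)
      omega
    · funext j
      simp [Int.toNat_of_nonneg (hnonneg j)]

lemma add_mem_lamFinset {n d e : ℕ} {l m : Fin n → ℤ} (hl : l ∈ lamFinset n d)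
    (hm : m ∈ lamFinset n e) : l + m ∈ lamFinset n (d + e) := by
  rw [mem_lamFinset] at hl hm ⊢
  refine ⟨fun j => add_nonneg (hl.1 j) (hm.1 j), ?_⟩
  simp only [Pi.add_apply, Finset.sum_add_distrib, hl.2, hm.2, Nat.cast_add]

lemma const_mem_lamFinset (n k : ℕ) : (fun _ => (k : ℤ)) ∈ lamFinset n (n * k) := by
  rw [mem_lamFinset]
  exact ⟨fun _ => Int.natCast_nonneg k, by simp⟩

lemma sum_lamFinset_add_eq {M : Type*} [AddCommMonoid M] {n d e : ℕ} {μ : Fin n → ℤ}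
    (hμ : μ ∈ lamFinset n e) (F : (Fin n → ℤ) → M)
    (hF : ∀ l, l - μ ∉ lamFinset n d → F l = 0) :
    ∑ l ∈ lamFinset n (d + e), F l = ∑ m ∈ lamFinset n d, F (m + μ) := by
  have hsub : (lamFinset n d).image (· + μ) ⊆ lamFinset n (d + e) := by
    simp only [Finset.image_subset_iff]
    exact fun m hm => add_mem_lamFinset hm hμ
  rw [← Finset.sum_subset hsub, Finset.sum_image fun _ _ _ _ => add_right_cancel]
  intro l _ hl
  refine hF l fun hmem => hl ?_
  exact Finset.mem_image.mpr ⟨l - μ, hmem, sub_add_cancel l μ⟩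

section Relations

variable {n d : ℕ}

lemma qe_eq_zero {l : Fin n → ℤ} (h : l ∉ lamFinset n d) : (qe l : QSchur n d) = 0 := by
  simpa [qe] using RingQuot.mkAlgHom_rel Fq (QSRel.zero (d := d) l h)

lemma qe_mul_qe (l m : Fin n → ℤ) :
    (qe l : QSchur n d) * qe m = if l = m then qe l else 0 := by
  have h := RingQuot.mkAlgHom_rel Fq (QSRel.orth (d := d) l m)
  split_ifs at h ⊢ <;> simpa [qe] using h

lemma sum_qe : ∑ l ∈ lamFinset n d, (qe l : QSchur n d) = 1 := by
  simpa [qe] using RingQuot.mkAlgHom_rel Fq (QSRel.unit (n := n) (d := d))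

lemma qep_mul_qe (i : Fin (n - 1)) (l : Fin n → ℤ) :
    (qep i : QSchur n d) * qe l = qe (l + alphaWt i) * qep i := by
  simpa [qe, qep] using RingQuot.mkAlgHom_rel Fq (QSRel.upComm (d := d) i l)

lemma qem_mul_qe (i : Fin (n - 1)) (l : Fin n → ℤ) :
    (qem i : QSchur n d) * qe l = qe (l - alphaWt i) * qem i := by
  simpa [qe, qem] using RingQuot.mkAlgHom_rel Fq (QSRel.dnComm (d := d) i l)

lemma qep_mul_qem_sub (i j : Fin (n - 1)) :
    (qep i : QSchur n d) * qem j - qem j * qep i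
      = if i = j then ∑ l ∈ lamFinset n d, qint (l (loIdx i) - l (hiIdx i)) • qe l
        else 0 := by
  have h := RingQuot.mkAlgHom_rel Fq (QSRel.commutator (d := d) i j)
  split_ifs at h ⊢ <;> simpa [qe, qep, qem, map_sum] using h

end Relations

section Projection

variable (n d k : ℕ)

def shiftFree : FreeAlgebra Fq (QGen n) →ₐ[Fq] QSchur n d :=
  FreeAlgebra.lift Fq fun
    | QGen.wt l => qe (l - fun _ : Fin n => (k : ℤ))
    | QGen.up i => qep i
    | QGen.dn i => qem i

variable {n d k}

@[simp] lemma shiftFree_eF (l : Fin n → ℤ) :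
    shiftFree n d k (eF l) = qe (l - fun _ => (k : ℤ)) :=
  FreeAlgebra.lift_ι_apply _ _

@[simp] lemma shiftFree_epF (i : Fin (n - 1)) : shiftFree n d k (epF i) = qep i :=
  FreeAlgebra.lift_ι_apply _ _

@[simp] lemma shiftFree_emF (i : Fin (n - 1)) : shiftFree n d k (emF i) = qem i :=
  FreeAlgebra.lift_ι_apply _ _

lemma sum_smul_qe_sub_const (c : (Fin n → ℤ) → Fq) :
    ∑ l ∈ lamFinset n (d + n * k), c l • (qe (l - fun _ => (k : ℤ)) : QSchur n d)
      = ∑ m ∈ lamFinset n d, c (m + fun _ => (k : ℤ)) • qe m := by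
  rw [sum_lamFinset_add_eq (const_mem_lamFinset n k) _
    fun l hl => by rw [qe_eq_zero hl, smul_zero]]
  simp only [add_sub_cancel_right]

lemma shiftFree_rel {x y : FreeAlgebra Fq (QGen n)} (h : QSRel n (d + n * k) x y) :
    shiftFree n d k x = shiftFree n d k y := by
  induction h with
  | orth l m =>
    have hshift : (l - fun _ => (k : ℤ)) = (m - fun _ => (k : ℤ)) ↔ l = m := sub_left_inj
    simp only [map_mul, shiftFree_eF, qe_mul_qe, hshift]
    split_ifs <;> simp
  | unit =>
    rw [map_sum, map_one]
    simpa [sum_qe] using sum_smul_qe_sub_const (d := d) (k := k) fun _ => (1 : Fq)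
  | zero l hl =>
    rw [map_zero, shiftFree_eF]
    refine qe_eq_zero fun hmem => hl ?_
    simpa using add_mem_lamFinset hmem (const_mem_lamFinset n k)
  | upComm i l =>
    simp only [map_mul, shiftFree_eF, shiftFree_epF, qep_mul_qe, sub_add_eq_add_sub]
  | dnComm i l =>
    simp only [map_mul, shiftFree_eF, shiftFree_emF, qem_mul_qe, sub_right_comm]
  | commutator i j =>
    rw [map_sub, map_mul, map_mul, shiftFree_epF, shiftFree_emF, qep_mul_qem_sub]
    split_ifs
    · simp only [map_sum, map_smul, shiftFree_eF, sum_smul_qe_sub_const, Pi.add_apply,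
        add_sub_add_right_eq_sub]
    · rw [map_zero]

variable (n d k)

def qSchurShift : QSchur n (d + n * k) →ₐ[Fq] QSchur n d :=
  RingQuot.liftAlgHom Fq ⟨shiftFree n d k, fun _ _ h => shiftFree_rel h⟩

variable {n d k}

@[simp] lemma qSchurShift_qe (l : Fin n → ℤ) :
    qSchurShift n d k (qe l) = qe (l - fun _ => (k : ℤ)) :=
  (RingQuot.liftAlgHom_mkAlgHom_apply _ _ _ _).trans (shiftFree_eF l)

@[simp] lemma qSchurShift_qep (i : Fin (n - 1)) : qSchurShift n d k (qep i) = qep i :=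
  (RingQuot.liftAlgHom_mkAlgHom_apply _ _ _ _).trans (shiftFree_epF i)

@[simp] lemma qSchurShift_qem (i : Fin (n - 1)) : qSchurShift n d k (qem i) = qem i :=
  (RingQuot.liftAlgHom_mkAlgHom_apply _ _ _ _).trans (shiftFree_emF i)

/-- `1_λ ↦ 1_{λ + (kⁿ)}`, `E_{±i} ↦ E_{±i}` lifts the generators of `Ṡ(n, d)` through
`qSchurShift`. -/
lemma qSchurShift_surjective : Function.Surjective (qSchurShift n d k) := by
  let liftGen : QGen n → QSchur n (d + n * k)
    | QGen.wt l => qe (l + fun _ : Fin n => (k : ℤ))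
    | QGen.up i => qep i
    | QGen.dn i => qem i
  have hcomp : (qSchurShift n d k).comp (FreeAlgebra.lift Fq liftGen)
      = RingQuot.mkAlgHom Fq (QSRel n d) := by
    refine FreeAlgebra.hom_ext (funext fun g => ?_)
    cases g <;>
      simp only [Function.comp_apply, AlgHom.comp_apply, FreeAlgebra.lift_ι_apply, liftGen,
        qSchurShift_qe, qSchurShift_qep, qSchurShift_qem, add_sub_cancel_right] <;> rfl
  have hsurj := RingQuot.mkAlgHom_surjective Fq (QSRel n d)
  rw [← hcomp, AlgHom.coe_comp] at hsurj
  exact hsurj.of_comp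

end Projection

/-- For any `k ∈ ℕ`, the assignment `1_λ ↦ 1_{λ - (k,…,k)}` (with `1_μ = 0` when
`μ ∉ Λ(n,d)`, which holds automatically in the presented algebra) and `E_{±i} ↦ E_{±i}`
defines a well-defined surjective algebra homomorphism `π : Ṡ(n, d+nk) → Ṡ(n,d)`. -/
theorem qSchur_projection (n d k : ℕ) :
    ∃ π : QSchur n (d + n * k) →ₐ[Fq] QSchur n d,
      Function.Surjective π ∧
      (∀ l : Fin n → ℤ, π (qe l) = qe (l - fun _ => (k : ℤ))) ∧
      (∀ i : Fin (n - 1), π (qep i) = qep i) ∧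
      (∀ i : Fin (n - 1), π (qem i) = qem i) :=
  ⟨qSchurShift n d k, qSchurShift_surjective, qSchurShift_qe, qSchurShift_qep, qSchurShift_qem⟩
end
end

section
/- The map τ defined on generators by τ(1_λ) = 1_λ, τ(1_{λ+α_i} E_i 1_λ) = q^{-1-(λ_i - λ_{i+1})} 1_λ E_{-i} 1_{λ+α_i}, and τ(1_λ E_{-i} 1_{λ+α_i}) = q^{1+(λ_i-λ_{i+1})} 1_{λ+α_i} E_i 1_λ extends to a well-defined algebra anti-involution of Ṡ(n,d), i.e. an algebra isomorphism Ṡ(n,d) → Ṡ(n,d)^{op} whose square is the identity. -/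
/-!
Since `τ` must reverse products, it is built as an algebra map `Ṡ(n,d) → Ṡ(n,d)ᵐᵒᵖ` out of the
presentation: `1_λ ↦ 1_λ`, `E_i ↦ K(g_i⁻¹) E_{-i}` and `E_{-i} ↦ E_i K(g_i)`, where `K(f) = diag f`
is the diagonal element `∑_λ f(λ) 1_λ` and `g_i(λ) = q^{1 + λ_i - λ_{i+1}}` is `tauCoeff i λ`.
Every relation is checked after multiplying on the left by an arbitrary `1_μ`, which suffices since
`∑_μ 1_μ = 1`; there each diagonal factor collapses to a scalar. In the commutator relation the two
scalars that appear agree because the Cartan matrix of type `A` is symmetric. Since `τ` fixes every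
`K(f)` and `K(g_i) K(g_i⁻¹) = 1`, `τ²` is the identity on generators.
-/

noncomputable section

open MulOpposite

def AlgEquiv.ofAntiInvolutive {R A : Type*} [CommSemiring R] [Semiring A] [Algebra R A]
    (τ : A →ₐ[R] Aᵐᵒᵖ) (h : ∀ x, (τ (τ x).unop).unop = x) : A ≃ₐ[R] Aᵐᵒᵖ :=
  { τ with
    invFun := fun y => (τ y.unop).unop
    left_inv := h
    right_inv := fun y => unop_injective (h y.unop) }

namespace QSchur

variable {n d : ℕ}

def corootPair (i : Fin (n - 1)) (l : Fin n → ℤ) : ℤ := l (loIdx i) - l (hiIdx i)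

theorem corootPair_add (i : Fin (n - 1)) (a b : Fin n → ℤ) :
    corootPair i (a + b) = corootPair i a + corootPair i b := by
  simp only [corootPair, Pi.add_apply]; ring

theorem corootPair_sub (i : Fin (n - 1)) (a b : Fin n → ℤ) :
    corootPair i (a - b) = corootPair i a - corootPair i b := by
  simp only [corootPair, Pi.sub_apply]; ring

theorem corootPair_alphaWt_self (i : Fin (n - 1)) : corootPair i (alphaWt (n := n) i) = 2 := by
  simp [corootPair, alphaWt, loIdx, hiIdx, Fin.ext_iff]

theorem corootPair_alphaWt_comm (i j : Fin (n - 1)) :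
    corootPair j (alphaWt (n := n) i) = corootPair i (alphaWt (n := n) j) := by
  simp only [corootPair, alphaWt, loIdx, hiIdx, Fin.ext_iff]
  split_ifs <;> omega

def diag (f : (Fin n → ℤ) → Fq) : QSchur n d := ∑ l ∈ lamFinset n d, f l • qe l

theorem qe_mul_qe (l m : Fin n → ℤ) :
    (qe l : QSchur n d) * qe m = if l = m then qe l else 0 := by
  simpa [qe, apply_ite (RingQuot.mkAlgHom Fq (QSRel n d))] using
    RingQuot.mkAlgHom_rel Fq (QSRel.orth (d := d) l m)

theorem sum_qe : ∑ l ∈ lamFinset n d, (qe l : QSchur n d) = 1 := by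
  simpa [qe] using RingQuot.mkAlgHom_rel Fq (QSRel.unit (n := n) (d := d))

theorem qe_eq_zero {l : Fin n → ℤ} (h : l ∉ lamFinset n d) : (qe l : QSchur n d) = 0 := by
  simpa [qe] using RingQuot.mkAlgHom_rel Fq (QSRel.zero (d := d) l h)

theorem qep_mul_qe (i : Fin (n - 1)) (l : Fin n → ℤ) :
    (qep i : QSchur n d) * qe l = qe (l + alphaWt i) * qep i := by
  simpa [qe, qep] using RingQuot.mkAlgHom_rel Fq (QSRel.upComm (d := d) i l)

theorem qem_mul_qe (i : Fin (n - 1)) (l : Fin n → ℤ) :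
    (qem i : QSchur n d) * qe l = qe (l - alphaWt i) * qem i := by
  simpa [qe, qem] using RingQuot.mkAlgHom_rel Fq (QSRel.dnComm (d := d) i l)

theorem qep_mul_qem_sub (i j : Fin (n - 1)) :
    (qep i : QSchur n d) * qem j - qem j * qep i =
      if i = j then diag fun l => qint (corootPair i l) else 0 := by
  simpa [qe, qep, qem, diag, corootPair, apply_ite (RingQuot.mkAlgHom Fq (QSRel n d))] using
    RingQuot.mkAlgHom_rel Fq (QSRel.commutator (d := d) i j)

theorem algHom_ext {B : Type*} [Semiring B] [Algebra Fq B] {f g : QSchur n d →ₐ[Fq] B}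
    (hqe : ∀ l, f (qe l) = g (qe l)) (hqep : ∀ i, f (qep i) = g (qep i))
    (hqem : ∀ i, f (qem i) = g (qem i)) : f = g :=
  RingQuot.ringQuot_ext' Fq f g <| FreeAlgebra.hom_ext <| funext fun
    | .wt l => hqe l
    | .up i => hqep i
    | .dn i => hqem i

theorem qe_mul_qep (i : Fin (n - 1)) (l : Fin n → ℤ) :
    (qe l : QSchur n d) * qep i = qep i * qe (l - alphaWt i) := by
  rw [qep_mul_qe, sub_add_cancel]

theorem qe_mul_qem (i : Fin (n - 1)) (l : Fin n → ℤ) :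
    (qe l : QSchur n d) * qem i = qem i * qe (l + alphaWt i) := by
  rw [qem_mul_qe, add_sub_cancel_right]

theorem qe_mul_diag (f : (Fin n → ℤ) → Fq) (μ : Fin n → ℤ) :
    (qe μ : QSchur n d) * diag f = f μ • qe μ := by
  by_cases hμ : μ ∈ lamFinset n d
  · simp only [diag, Finset.mul_sum, mul_smul_comm, qe_mul_qe, smul_ite, smul_zero,
      Finset.sum_ite_eq, if_pos hμ]
  · rw [qe_eq_zero hμ, zero_mul, smul_zero]

theorem diag_mul_qe (f : (Fin n → ℤ) → Fq) (μ : Fin n → ℤ) :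
    diag f * (qe μ : QSchur n d) = f μ • qe μ := by
  by_cases hμ : μ ∈ lamFinset n d
  · simp only [diag, Finset.sum_mul, smul_mul_assoc, qe_mul_qe, smul_ite, smul_zero,
      Finset.sum_ite_eq', if_pos hμ]
  · rw [qe_eq_zero hμ, mul_zero, smul_zero]

theorem eq_of_forall_qe_mul_eq {x y : QSchur n d} (h : ∀ μ, qe μ * x = qe μ * y) : x = y := by
  rw [← one_mul x, ← one_mul y, ← sum_qe, Finset.sum_mul, Finset.sum_mul]
  exact Finset.sum_congr rfl fun μ _ => h μ

theorem diag_mul_diag (f g : (Fin n → ℤ) → Fq) :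
    (diag f : QSchur n d) * diag g = diag (f * g) :=
  eq_of_forall_qe_mul_eq fun μ => by
    rw [← mul_assoc, qe_mul_diag, smul_mul_assoc, qe_mul_diag, qe_mul_diag, smul_smul, Pi.mul_apply]

theorem diag_one : (diag 1 : QSchur n d) = 1 := by
  simp only [diag, Pi.one_apply, one_smul, sum_qe]

theorem qe_mul_mul_diag {μ ν : Fin n → ℤ} {x : QSchur n d} (h : qe μ * x = x * qe ν)
    (f : (Fin n → ℤ) → Fq) : qe μ * x * diag f = f ν • (qe μ * x) := by
  rw [h, mul_assoc, qe_mul_diag, mul_smul_comm]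

def tauCoeff (i : Fin (n - 1)) (l : Fin n → ℤ) : Fq := qv ^ (1 + corootPair i l)

theorem qv_ne_zero : qv ≠ 0 := RatFunc.X_ne_zero

theorem tauCoeff_mul_inv (i : Fin (n - 1)) : tauCoeff i * (tauCoeff i)⁻¹ = 1 :=
  funext fun _ => mul_inv_cancel₀ (zpow_ne_zero _ qv_ne_zero)

/-- `τ(E_i)`. -/
def tauUp (i : Fin (n - 1)) : QSchur n d := diag (tauCoeff i)⁻¹ * qem i

/-- `τ(E_{-i})`. -/
def tauDown (i : Fin (n - 1)) : QSchur n d := qep i * diag (tauCoeff i)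

theorem qe_mul_tauUp (i : Fin (n - 1)) (l : Fin n → ℤ) :
    qe l * tauUp i = (tauUp i : QSchur n d) * qe (l + alphaWt i) := by
  rw [tauUp, ← mul_assoc, qe_mul_diag, ← diag_mul_qe, mul_assoc, qe_mul_qem, mul_assoc]

theorem qe_mul_tauDown (i : Fin (n - 1)) (l : Fin n → ℤ) :
    qe l * tauDown i = (tauDown i : QSchur n d) * qe (l - alphaWt i) := by
  rw [tauDown, ← mul_assoc, qe_mul_qep, mul_assoc, qe_mul_diag, ← diag_mul_qe, mul_assoc]

theorem qe_mul_tauDown_mul_tauUp (i j : Fin (n - 1)) (μ : Fin n → ℤ) :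
    qe μ * (tauDown j * tauUp i) = (tauCoeff j (μ - alphaWt j) * (tauCoeff i (μ - alphaWt j))⁻¹) •
      ((qe μ : QSchur n d) * (qep j * qem i)) := by
  rw [tauDown, tauUp, mul_assoc, ← mul_assoc (diag _), diag_mul_diag, ← mul_assoc, ← mul_assoc,
    qe_mul_mul_diag (qe_mul_qep j μ), smul_mul_assoc, mul_assoc, Pi.mul_apply, Pi.inv_apply]

theorem qe_mul_tauUp_mul_tauDown (i j : Fin (n - 1)) (μ : Fin n → ℤ) :
    qe μ * (tauUp i * tauDown j) =
      ((tauCoeff i μ)⁻¹ * tauCoeff j (μ + alphaWt i - alphaWt j)) •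
        ((qe μ : QSchur n d) * (qem i * qep j)) := by
  have hshift : (qe μ : QSchur n d) * (qem i * qep j) =
      qem i * qep j * qe (μ + alphaWt i - alphaWt j) := by
    rw [← mul_assoc, qe_mul_qem, mul_assoc, qe_mul_qep, mul_assoc]
  rw [tauUp, tauDown, ← mul_assoc, ← mul_assoc, ← mul_assoc, qe_mul_diag, smul_mul_assoc,
    smul_mul_assoc, smul_mul_assoc, mul_assoc _ (qem i), qe_mul_mul_diag hshift, smul_smul,
    Pi.inv_apply]

theorem tauCoeff_shift_comm (i j : Fin (n - 1)) (μ : Fin n → ℤ) :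
    tauCoeff j (μ - alphaWt j) * (tauCoeff i (μ - alphaWt j))⁻¹ =
      (tauCoeff i μ)⁻¹ * tauCoeff j (μ + alphaWt i - alphaWt j) := by
  simp only [tauCoeff, ← zpow_neg, ← zpow_add₀ qv_ne_zero, corootPair_add,
    corootPair_sub, corootPair_alphaWt_self, corootPair_alphaWt_comm i j]
  ring_nf

theorem tauDown_mul_tauUp_sub (i j : Fin (n - 1)) :
    tauDown j * tauUp i - tauUp i * tauDown j =
      if i = j then (diag fun l => qint (corootPair i l) : QSchur n d) else 0 := by
  refine eq_of_forall_qe_mul_eq fun μ => ?_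
  rw [mul_sub, qe_mul_tauDown_mul_tauUp, qe_mul_tauUp_mul_tauDown, ← tauCoeff_shift_comm]
  -- `rw [← smul_sub]` fails to unify the scalar action of `RingQuot` with `DistribSMul.toSMul`.
  refine (smul_sub (A := QSchur n d) _ _ _).symm.trans ?_
  rw [← mul_sub, qep_mul_qem_sub]
  obtain rfl | hij := eq_or_ne i j
  · rw [if_pos rfl, ← Pi.inv_apply, ← Pi.mul_apply, tauCoeff_mul_inv, Pi.one_apply, one_smul]
  · rw [if_neg hij.symm, if_neg hij, mul_zero, smul_zero]

def tauGen : QGen n → (QSchur n d)ᵐᵒᵖ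
  | .wt l => op (qe l)
  | .up i => op (tauUp i)
  | .dn i => op (tauDown i)

theorem lift_tauGen_rel ⦃x y : FreeAlgebra Fq (QGen n)⦄ (h : QSRel n d x y) :
    FreeAlgebra.lift Fq (tauGen (d := d)) x = FreeAlgebra.lift Fq tauGen y := by
  have hι (g : QGen n) : FreeAlgebra.lift Fq (tauGen (d := d)) (FreeAlgebra.ι Fq g) = tauGen g :=
    FreeAlgebra.lift_ι_apply tauGen g
  cases h with
  | orth l m =>
    obtain rfl | hlm := eq_or_ne l m
    · simp only [map_mul, eF, hι, tauGen, ← op_mul, qe_mul_qe, if_true]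
    · simp only [map_mul, eF, hι, tauGen, ← op_mul, qe_mul_qe, if_neg hlm, if_neg hlm.symm,
        op_zero, map_zero]
  | unit => simp only [map_sum, eF, hι, tauGen, ← Finset.op_sum, sum_qe, map_one, op_one]
  | zero l h => rw [eF, hι, tauGen, qe_eq_zero h, op_zero, map_zero]
  | upComm i l => simp only [map_mul, eF, epF, hι, tauGen, ← op_mul, qe_mul_tauUp]
  | dnComm i l => simp only [map_mul, eF, emF, hι, tauGen, ← op_mul, qe_mul_tauDown]
  | commutator i j =>
    simp only [map_sub, map_mul, epF, emF, hι, tauGen, ← op_mul, ← op_sub, tauDown_mul_tauUp_sub,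
      apply_ite op, apply_ite (FreeAlgebra.lift Fq tauGen), diag, map_sum, map_smul, eF,
      Finset.op_sum, op_smul, corootPair, op_zero, map_zero]

def tauHom : QSchur n d →ₐ[Fq] (QSchur n d)ᵐᵒᵖ :=
  RingQuot.liftAlgHom Fq ⟨FreeAlgebra.lift Fq tauGen, lift_tauGen_rel⟩

theorem tauHom_mkAlgHom_ι (g : QGen n) :
    tauHom (RingQuot.mkAlgHom Fq (QSRel n d) (FreeAlgebra.ι Fq g)) = tauGen g := by
  rw [tauHom, RingQuot.liftAlgHom_mkAlgHom_apply, FreeAlgebra.lift_ι_apply]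

theorem tauHom_qe (l : Fin n → ℤ) : tauHom (qe l : QSchur n d) = op (qe l) :=
  tauHom_mkAlgHom_ι (.wt l)

theorem tauHom_qep (i : Fin (n - 1)) : tauHom (qep i : QSchur n d) = op (tauUp i) :=
  tauHom_mkAlgHom_ι (.up i)

theorem tauHom_qem (i : Fin (n - 1)) : tauHom (qem i : QSchur n d) = op (tauDown i) :=
  tauHom_mkAlgHom_ι (.dn i)

theorem tauHom_diag (f : (Fin n → ℤ) → Fq) : tauHom (diag f : QSchur n d) = op (diag f) := by
  simp only [diag, map_sum, map_smul, tauHom_qe, Finset.op_sum, op_smul]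

theorem tauHom_tauUp (i : Fin (n - 1)) : tauHom (tauUp i : QSchur n d) = op (qep i) := by
  rw [tauUp, map_mul, tauHom_diag, tauHom_qem, ← op_mul, tauDown, mul_assoc, diag_mul_diag,
    tauCoeff_mul_inv, diag_one, mul_one]

theorem tauHom_tauDown (i : Fin (n - 1)) : tauHom (tauDown i : QSchur n d) = op (qem i) := by
  rw [tauDown, map_mul, tauHom_qep, tauHom_diag, ← op_mul, tauUp, ← mul_assoc, diag_mul_diag,
    tauCoeff_mul_inv, diag_one, one_mul]

theorem unop_tauHom_unop_tauHom (x : QSchur n d) : (tauHom (tauHom x).unop).unop = x := by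
  have hsq : (AlgEquiv.opOp Fq (QSchur n d)).symm.toAlgHom.comp ((AlgHom.op tauHom).comp tauHom) =
      AlgHom.id Fq (QSchur n d) :=
    algHom_ext
      (fun l => by simp [tauHom_qe])
      (fun i => by simp [tauHom_qep, tauHom_tauUp])
      (fun i => by simp [tauHom_qem, tauHom_tauDown])
  exact AlgHom.congr_fun hsq x

theorem qe_mul_tauUp_mul_qe (i : Fin (n - 1)) (l : Fin n → ℤ) :
    qe l * tauUp i * qe (l + alphaWt i) =
      qv ^ (-1 - corootPair i l) • ((qe l : QSchur n d) * qem i * qe (l + alphaWt i)) := by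
  rw [tauUp, ← mul_assoc, qe_mul_diag, smul_mul_assoc, smul_mul_assoc, Pi.inv_apply, tauCoeff,
    ← zpow_neg, neg_add']

theorem qe_mul_tauDown_mul_qe (i : Fin (n - 1)) (l : Fin n → ℤ) :
    qe (l + alphaWt i) * tauDown i * qe l =
      qv ^ (1 + corootPair i l) • ((qe (l + alphaWt i) : QSchur n d) * qep i * qe l) := by
  rw [tauDown, ← mul_assoc, mul_assoc, diag_mul_qe, mul_smul_comm, tauCoeff]

end QSchur

open QSchur

/-- The map `τ` with `τ(1_λ) = 1_λ`,
`τ(1_{λ+α_i} E_i 1_λ) = q^{-1-(λ_i - λ_{i+1})} 1_λ E_{-i} 1_{λ+α_i}` and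
`τ(1_λ E_{-i} 1_{λ+α_i}) = q^{1+(λ_i-λ_{i+1})} 1_{λ+α_i} E_i 1_λ` extends to a
well-defined algebra anti-involution of `Ṡ(n,d)`: an algebra isomorphism
`Ṡ(n,d) ≃ Ṡ(n,d)ᵒᵖ` whose square is the identity. -/
theorem qSchur_anti_involution (n d : ℕ) :
    ∃ τ : QSchur n d ≃ₐ[Fq] (QSchur n d)ᵐᵒᵖ,
      (∀ l : Fin n → ℤ, τ (qe l) = MulOpposite.op (qe l)) ∧
      (∀ (i : Fin (n - 1)) (l : Fin n → ℤ),
        τ (qe (l + alphaWt i) * qep i * qe l) =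
          MulOpposite.op
            ((qv ^ (-1 - (l (loIdx i) - l (hiIdx i)))) •
              (qe l * qem i * qe (l + alphaWt i)))) ∧
      (∀ (i : Fin (n - 1)) (l : Fin n → ℤ),
        τ (qe l * qem i * qe (l + alphaWt i)) =
          MulOpposite.op
            ((qv ^ (1 + (l (loIdx i) - l (hiIdx i)))) •
              (qe (l + alphaWt i) * qep i * qe l))) ∧
      (∀ x : QSchur n d, (τ ((τ x).unop)).unop = x) := by
  refine ⟨AlgEquiv.ofAntiInvolutive tauHom unop_tauHom_unop_tauHom, tauHom_qe, fun i l => ?_,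
    fun i l => ?_, unop_tauHom_unop_tauHom⟩
  · change tauHom _ = _
    rw [map_mul, map_mul, tauHom_qe, tauHom_qe, tauHom_qep, ← op_mul, ← op_mul, ← mul_assoc,
      qe_mul_tauUp_mul_qe, corootPair]
  · change tauHom _ = _
    rw [map_mul, map_mul, tauHom_qe, tauHom_qe, tauHom_qem, ← op_mul, ← op_mul, ← mul_assoc,
      qe_mul_tauDown_mul_qe, corootPair]
end
end

section
/- The supersymmetric Schur polynomial π_α(x,y) = det(e_{α_i + j - i}(x,y))_{1 ≤ i,j ≤ m} vanishes whenever the partition α of length m does not lie in Γ(a,b), i.e. whenever α_j > b for some j > a. -/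
open MvPolynomial

noncomputable section

/-- `e_k(x,y)` for an integer index `k`, with `e_k(x,y) = 0` for `k < 0`. -/
noncomputable def superEInt (a b : ℕ) (k : ℤ) : MvPolynomial (Fin a ⊕ Fin b) ℚ :=
  if k < 0 then 0 else superElem a b k.toNat

/-- The supersymmetric Schur polynomial
`π_α(x,y) = det(e_{α_i + j - i}(x,y))_{1 ≤ i,j ≤ m}`. -/
noncomputable def supSchur (a b m : ℕ) (α : Fin m → ℕ) : MvPolynomial (Fin a ⊕ Fin b) ℚ :=
  Matrix.det (Matrix.of fun i j : Fin m =>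
    superEInt a b ((α i : ℤ) + (j : ℤ) - (i : ℤ)))

/-!
Right multiplication by the unitriangular Toeplitz matrix with entries `(-1)^(c-r) e_{c-r}(x)`,
the coefficients of `∏ᵢ (1 - xᵢ z)`, does not change the determinant. Because
`∏ᵢ (1 - xᵢ z) · ∑ₖ e_k(x,y) zᵏ = ∏ⱼ (1 - yⱼ z)` and `e_r(x) = 0` for `r > a`, it turns the entry
in row `i` and column `c ≥ a` into `(-1)^K e_K(y)` with `K = α_i + c - i`. For `i ≤ a ≤ c` this
index is at least `α_i ≥ α_j > b`, so the entry vanishes, and a zero block of `a + 1` rows and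
`m - a` columns forces the determinant to be zero.

The generating-function identity rests on `∑_r (-1)^r e_r(x) h_{n-r}(x) = 0` for `n > 0`: the
coefficient of a monomial `x^μ` in it is `∑_{S ⊆ supp μ} (-1)^{|S|} = 0`.
-/

open Finset

namespace MvPolynomial

variable {σ R : Type*} [Fintype σ]

theorem esymm_eq_zero_of_card_lt [CommSemiring R] {n : ℕ} (hn : Fintype.card σ < n) :
    esymm σ R n = 0 := by
  rw [esymm, powersetCard_eq_empty.2 (by simpa using hn), sum_empty]

variable [DecidableEq σ]

theorem prod_X_mul_hsymm_eq_sum [CommSemiring R] (S : Finset σ) {k n : ℕ} (hn : #S + k = n) :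
    (∏ i ∈ S, X i) * hsymm σ R k = ∑ μ : Sym σ n with S.val ≤ μ.1, (μ.1.map X).prod := by
  rw [hsymm, mul_sum]
  refine sum_bij' (fun s _ => ⟨S.val + s.1, by simp [← hn]⟩)
    (fun μ hμ => ⟨μ.1 - S.val, by rw [Multiset.card_sub (mem_filter.1 hμ).2]; simp [← hn]⟩)
    (fun s _ => mem_filter.2 ⟨mem_univ _, Multiset.le_add_right _ _⟩) (fun μ _ => mem_univ _)
    (fun s _ => by ext1; simp) (fun μ hμ => Sym.ext (add_tsub_cancel_of_le (mem_filter.1 hμ).2))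
    (fun s _ => ?_)
  change _ = ((S.val + s.1).map X).prod
  rw [Multiset.map_add, Multiset.prod_add, prod_eq_multiset_prod]

variable [CommRing R]

theorem sum_antidiagonal_neg_one_pow_esymm_mul_hsymm (n : ℕ) :
    ∑ p ∈ antidiagonal n, (-1) ^ p.1 * esymm σ R p.1 * hsymm σ R p.2 =
      if n = 0 then 1 else 0 := by
  calc ∑ p ∈ antidiagonal n, (-1) ^ p.1 * esymm σ R p.1 * hsymm σ R p.2
      = ∑ p ∈ antidiagonal n, ∑ S ∈ powersetCard p.1 univ,
          ∑ μ : Sym σ n with S.val ≤ μ.1, (-1) ^ #S * (μ.1.map X).prod := by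
        refine sum_congr rfl fun p hp => ?_
        rw [esymm, mul_sum, sum_mul]
        refine sum_congr rfl fun S hS => ?_
        rw [mem_powersetCard_univ] at hS
        rw [← mul_sum, ← prod_X_mul_hsymm_eq_sum S (hS ▸ mem_antidiagonal.1 hp), hS, mul_assoc]
    _ = ∑ S : Finset σ with #S ≤ n, ∑ μ : Sym σ n with S.val ≤ μ.1,
          (-1) ^ #S * (μ.1.map X).prod := by
        rw [sum_comm' (t' := univ.filter fun S : Finset σ => #S ≤ n)
          (s' := fun S => {(#S, n - #S)}) fun p S => ?_]
        · simp only [sum_singleton]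
        simp only [HasAntidiagonal.mem_antidiagonal, mem_powersetCard_univ, mem_filter, mem_univ,
          true_and, mem_singleton, Prod.ext_iff]
        omega
    _ = ∑ μ : Sym σ n, (∑ S ∈ μ.1.toFinset.powerset, (-1) ^ #S) * (μ.1.map X).prod := by
        simp_rw [sum_mul]
        refine sum_comm' fun S μ => ?_
        simp only [mem_filter, mem_univ, true_and, mem_powerset, and_true]
        have hle := Multiset.le_iff_subset (t := μ.1) S.nodup
        rw [← Multiset.toFinset_subset, S.val_toFinset] at hle
        rw [← hle]
        exact ⟨And.right, fun h => ⟨(Multiset.card_le_card h).trans_eq μ.2, h⟩⟩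
    _ = if n = 0 then 1 else 0 := by
        have hsign (s : Finset σ) :
            ∑ t ∈ s.powerset, (-1 : MvPolynomial σ R) ^ #t = if s = ∅ then 1 else 0 := by
          have := congrArg (Int.cast : ℤ → MvPolynomial σ R)
            (sum_powerset_neg_one_pow_card (x := s))
          push_cast at this
          exact this
        simp_rw [hsign, Multiset.toFinset_eq_empty]
        rcases eq_or_ne n 0 with rfl | hn
        · simp [Sym.eq_nil_of_card_zero]
        · rw [if_neg hn]
          refine sum_eq_zero fun μ _ => ?_
          rw [if_neg fun h => hn (by rw [← μ.2, h, Multiset.card_zero]), zero_mul]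

variable (σ R) in
theorem mk_neg_one_pow_esymm_mul_mk_hsymm :
    PowerSeries.mk (fun r => (-1) ^ r * esymm σ R r) * PowerSeries.mk (hsymm σ R) = 1 := by
  ext1 n
  rw [PowerSeries.coeff_mul, PowerSeries.coeff_one]
  simp only [PowerSeries.coeff_mk]
  exact sum_antidiagonal_neg_one_pow_esymm_mul_hsymm n

end MvPolynomial

namespace Matrix

theorem det_eq_zero_of_card_lt_card_add_card {n R : Type*} [Fintype n] [DecidableEq n]
    [CommRing R] {A : Matrix n n R} {s t : Finset n} (h : ∀ i ∈ s, ∀ j ∈ t, A i j = 0)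
    (hst : Fintype.card n < #s + #t) : A.det = 0 := by
  rw [det_apply]
  refine sum_eq_zero fun τ _ => ?_
  obtain ⟨j, hj⟩ := inter_nonempty_of_card_lt_card_add_card (subset_univ (t.map τ.toEmbedding))
    (subset_univ s) (by simpa [add_comm] using hst)
  rw [mem_inter, mem_map_equiv] at hj
  exact smul_eq_zero_of_right _ <|
    prod_eq_zero (mem_univ (τ.symm j)) (by simpa using h j hj.2 _ hj.1)

variable {R : Type*} {m : ℕ}

def upperToeplitz [Zero R] (g : ℕ → R) : Matrix (Fin m) (Fin m) R :=
  of fun r c => if r ≤ c then g (c - r : ℕ) else 0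

theorem det_upperToeplitz [CommRing R] {g : ℕ → R} (hg : g 0 = 1) :
    (upperToeplitz g : Matrix (Fin m) (Fin m) R).det = 1 := by
  have : (upperToeplitz g : Matrix (Fin m) (Fin m) R).IsUpperTriangular :=
    fun r c hcr => if_neg (not_le.2 hcr)
  rw [det_of_isUpperTriangular this]
  simp [upperToeplitz, hg]

theorem mul_upperToeplitz_apply [CommSemiring R] (f : ℤ → R) (g : ℕ → R) (β : Fin m → ℤ)
    (i c : Fin m) :
    ((of fun i j : Fin m => f (β i + j)) * upperToeplitz g : Matrix (Fin m) (Fin m) R) i c =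
      ∑ t ∈ range (c + 1), g t * f (β i + c - t) := by
  rw [mul_apply, ← sum_range_reflect]
  simp only [of_apply, upperToeplitz, mul_ite, mul_zero, ← Fin.val_fin_le]
  rw [Fin.sum_univ_eq_sum_range (fun r => if r ≤ (c : ℕ) then f (β i + r) * g (c - r) else 0) m,
    ← sum_filter, show (range m).filter (· ≤ (c : ℕ)) = range (c + 1) by ext; simp; omega]
  refine sum_congr rfl fun j hj => ?_
  have hjc : j ≤ c := Nat.lt_succ_iff.1 (mem_range.1 hj)
  rw [mul_comm, Nat.add_sub_cancel, Nat.cast_sub hjc]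
  ring_nf

end Matrix

theorem sum_antidiagonal_neg_one_pow_esymm_mul_superElem (a b K : ℕ) :
    ∑ p ∈ antidiagonal K, (-1) ^ p.1 * rename Sum.inl (esymm (Fin a) ℚ p.1) * superElem a b p.2 =
      (-1) ^ K * rename Sum.inr (esymm (Fin b) ℚ K) := by
  set Ex : PowerSeries (MvPolynomial (Fin a ⊕ Fin b) ℚ) :=
    .mk fun r => (-1) ^ r * rename Sum.inl (esymm (Fin a) ℚ r)
  set Hx : PowerSeries (MvPolynomial (Fin a ⊕ Fin b) ℚ) :=
    .mk fun k => rename Sum.inl (hsymm (Fin a) ℚ k)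
  set Ey : PowerSeries (MvPolynomial (Fin a ⊕ Fin b) ℚ) :=
    .mk fun s => (-1) ^ s * rename Sum.inr (esymm (Fin b) ℚ s)
  have hEH : Ex * Hx = 1 := by
    have := congrArg (PowerSeries.map (rename (Sum.inl : Fin a → Fin a ⊕ Fin b)).toRingHom)
      (mk_neg_one_pow_esymm_mul_mk_hsymm (Fin a) ℚ)
    rw [map_mul, map_one] at this
    convert this using 2 <;> ext <;> simp [Ex, Hx, PowerSeries.coeff_map]
  have hS (k : ℕ) : superElem a b k = PowerSeries.coeff k (Ey * Hx) := by
    rw [PowerSeries.coeff_mul, Nat.sum_antidiagonal_eq_sum_range_succ_mk, superElem]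
    simp only [Ey, Hx, PowerSeries.coeff_mk]
    exact sum_congr rfl fun s _ => by ring
  have := congrArg (PowerSeries.coeff K)
    (show Ex * (Ey * Hx) = Ey by rw [mul_left_comm, hEH, mul_one])
  rw [PowerSeries.coeff_mul] at this
  simpa only [Ex, Ey, PowerSeries.coeff_mk, ← hS] using this

theorem sum_range_neg_one_pow_esymm_mul_superEInt {a N : ℕ} (b K : ℕ) (hN : a ≤ N) :
    ∑ t ∈ range (N + 1), (-1) ^ t * rename Sum.inl (esymm (Fin a) ℚ t) * superEInt a b (K - t) =
      (-1) ^ K * rename Sum.inr (esymm (Fin b) ℚ K) := by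
  rw [← sum_antidiagonal_neg_one_pow_esymm_mul_superElem,
    Nat.sum_antidiagonal_eq_sum_range_succ_mk]
  set G : ℕ → MvPolynomial (Fin a ⊕ Fin b) ℚ := fun t =>
    (-1) ^ t * rename Sum.inl (esymm (Fin a) ℚ t) * superEInt a b (K - t)
  have hsumN : ∑ t ∈ range (N + 1), G t = ∑ t ∈ range (N + K + 1), G t := by
    refine sum_subset (range_subset_range.2 (by omega)) fun t ht htN => ?_
    rw [mem_range] at ht htN
    simp only [G, esymm_eq_zero_of_card_lt (σ := Fin a) (R := ℚ) (n := t)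
      (by rw [Fintype.card_fin]; omega), map_zero, mul_zero, zero_mul]
  have hsumK : ∑ t ∈ range (K + 1), G t = ∑ t ∈ range (N + K + 1), G t := by
    refine sum_subset (range_subset_range.2 (by omega)) fun t ht htK => ?_
    rw [mem_range] at ht htK
    simp only [G, superEInt, if_pos (by omega : (K : ℤ) - t < 0), mul_zero]
  rw [hsumN, ← hsumK]
  refine sum_congr rfl fun t ht => ?_
  rw [mem_range] at ht
  simp only [G, superEInt, if_neg (by omega : ¬ (K : ℤ) - t < 0)]
  congr 3
  omega

/-- The supersymmetric Schur polynomial `π_α(x,y)` vanishes whenever the partition `α`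
of length `m` does not lie in `Γ(a,b)`, i.e. whenever `α_j > b` for some `j > a`
(in `0`-indexed terms: `α j > b` for some index `j ≥ a`). -/
theorem supSchur_eq_zero_of_not_mem_hook (a b m : ℕ) (α : Fin m → ℕ)
    (hα : Antitone α) (h : ∃ j : Fin m, a ≤ (j : ℕ) ∧ b < α j) :
    supSchur a b m α = 0 := by
  obtain ⟨j, hja, hjb⟩ := h
  set a' : Fin m := ⟨a, hja.trans_lt j.2⟩
  set g : ℕ → MvPolynomial (Fin a ⊕ Fin b) ℚ := fun t =>
    (-1) ^ t * rename Sum.inl (esymm (Fin a) ℚ t)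
  have hcolumn_ops : supSchur a b m α =
      ((Matrix.of fun i j : Fin m => superEInt a b ((α i : ℤ) - i + j)) *
        Matrix.upperToeplitz g).det := by
    rw [Matrix.det_mul, Matrix.det_upperToeplitz (by simp [g]), mul_one, supSchur]
    simp only [add_sub_right_comm]
  rw [hcolumn_ops]
  refine Matrix.det_eq_zero_of_card_lt_card_add_card (s := Iic a') (t := Ici a')
    (fun i hi c hc => ?_) (by simp [a']; omega)
  rw [mem_Iic] at hi
  rw [mem_Ici] at hc
  have hK (t : ℕ) : (α i : ℤ) - i + c - t = ((α i + c - i : ℕ) : ℤ) - t := by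
    have : (i : ℕ) ≤ c := hi.trans hc
    omega
  have hbK : b < α i + c - i := (hjb.trans_le (hα (hi.trans hja))).trans_le (by omega)
  rw [Matrix.mul_upperToeplitz_apply]
  simp only [hK, g]
  rw [sum_range_neg_one_pow_esymm_mul_superEInt b _ hc,
    esymm_eq_zero_of_card_lt (by rwa [Fintype.card_fin]), map_zero, mul_zero]
end
end

section
/- For a = λ_i, b = λ_{i+1}, the bimodule map sending p ↦ ∂_{x v̲}(∑_{ℓ=0}^{b} (-1)^ℓ e_{b-ℓ}(t̲) x^{ℓ+r} p), which is the image of the r-dotted clockwise bubble under the 2-representation F_Bim, equals multiplication by (-1)^b ∑_{l=0}^{b-a+r+1} (-1)^l e_l(t̲) h_{b-a+r+1-l}(u̲) on the ring of partially symmetric polynomials; in particular it is zero when r < a-b-1 and equals (-1)^b times the identity when r = a-b-1. -/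
open MvPolynomial

noncomputable section

variable {σ : Type} [DecidableEq σ]

/-- The automorphism of the field of rational functions swapping the variables `v`, `w`. -/
noncomputable def swapVars (v w : σ) :
    FractionRing (MvPolynomial σ ℚ) ≃+* FractionRing (MvPolynomial σ ℚ) :=
  IsFractionRing.ringEquivOfRingEquiv
    (MvPolynomial.renameEquiv ℚ (Equiv.swap v w)).toRingEquiv

/-- The divided difference operator `∂_{v w} f = (f - f|_{v ↔ w}) / (X v - X w)`. -/
noncomputable def divDiff (v w : σ) (f : FractionRing (MvPolynomial σ ℚ)) :
    FractionRing (MvPolynomial σ ℚ) :=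
  (f - swapVars v w f) /
    algebraMap (MvPolynomial σ ℚ) (FractionRing (MvPolynomial σ ℚ)) (X v - X w)

/-- The variables: `t_1,…,t_b` are the `Sum.inl` variables, and the `u`-alphabet
`u_1,…,u_a` consists of all `Sum.inr` variables; among the latter, `x := u_1` and
`v_1,…,v_{a-1}` are the remaining ones, so that `e_l(x, v̲) = e_l(u̲)` holds. -/
abbrev BubbleVars (a b : ℕ) : Type := Fin b ⊕ Fin a

/-- The iterated divided difference `∂_{x v̲} = ∂_{x v_1} ⋯ ∂_{x v_{a-1}}` applied to
`∑_{ℓ=0}^{b} (-1)^ℓ e_{b-ℓ}(t̲) x^{ℓ+r} p`; this is the image of `p` under the image of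
the `r`-dotted clockwise bubble under the 2-representation `F_Bim`. -/
noncomputable def bubbleImage (a b r : ℕ) (ha : 0 < a)
    (p : MvPolynomial (BubbleVars a b) ℚ) :
    FractionRing (MvPolynomial (BubbleVars a b) ℚ) :=
  ((List.finRange a).filter fun i => i ≠ (⟨0, ha⟩ : Fin a)).foldr
    (fun i acc => divDiff (Sum.inr (⟨0, ha⟩ : Fin a)) (Sum.inr i) acc)
    (algebraMap (MvPolynomial (BubbleVars a b) ℚ)
      (FractionRing (MvPolynomial (BubbleVars a b) ℚ))
      (∑ l ∈ Finset.range (b + 1),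
        (-1 : MvPolynomial (BubbleVars a b) ℚ) ^ l *
          rename Sum.inl (esymm (Fin b) ℚ (b - l)) *
          X (Sum.inr (⟨0, ha⟩ : Fin a)) ^ (l + r) * p))

/-! If `q` is invariant under `x ↔ w`, then `∂_{x w}` sends `q · h_m(x, L)` to
`q · h_{m-1}(x, w, L)`, because `h_m(x, L) - h_m(w, L) = (x - w) h_{m-1}(x, w, L)`. Starting
from `x^N = h_N(x)` and iterating over `v̲` gives `∂_{x v̲}(q x^N) = q h_{N-a+1}(u̲)`; this
applies to each summand, with `q = (-1)^ℓ e_{b-ℓ}(t̲) p`. Reflecting `ℓ ↦ b - ℓ` then gives the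
stated sum: the terms that fall outside its range vanish, because `e_l(t̲) = 0` for `l > b` and
`h_m = 0` for `m < 0`. -/

namespace MvPolynomial

variable {α β R : Type*}

section CommSemiring

variable [CommSemiring R]

theorem esymm_eq_zero_of_card_lt_s17 [Fintype α] {n : ℕ} (h : Fintype.card α < n) :
    esymm α R n = 0 := by
  rw [esymm, Finset.powersetCard_eq_empty.mpr (by simpa using h), Finset.sum_empty]

theorem hsymm_option_succ [Fintype α] [DecidableEq α] (n : ℕ) :
    hsymm (Option α) R (n + 1) =
      X none * hsymm (Option α) R n + rename some (hsymm α R (n + 1)) := by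
  simp only [hsymm, ← (symOptionSuccEquiv (α := α) (n := n)).symm.sum_comp,
    Fintype.sum_sum_type, Finset.mul_sum, map_sum, map_multiset_prod]
  congr 1
  · simp [symOptionSuccEquiv, Sym.coe_cons]
  · simp [symOptionSuccEquiv, Multiset.map_map]

theorem hsymm_fin_succ_succ (k n : ℕ) :
    hsymm (Fin (k + 1)) R (n + 1) =
      X 0 * hsymm (Fin (k + 1)) R n + rename Fin.succ (hsymm (Fin k) R (n + 1)) := by
  have := congrArg (rename (_root_.finSuccEquiv k).symm) (hsymm_option_succ (R := R) (α := Fin k) n)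
  simpa [rename_hsymm, rename_rename, Function.comp_def] using this

/-- `h_m` in the variables listed in `l`. The degree is an integer, with `h_m = 0` for `m < 0`,
so that divided differences can lower it freely. -/
def hsymmList : List α → ℤ → MvPolynomial α R
  | [], m => if m = 0 then 1 else 0
  | y :: ys, m => ∑ j ∈ Finset.range (m.toNat + 1), X y ^ j * hsymmList ys (m - j)

theorem hsymmList_of_neg (l : List α) {m : ℤ} (hm : m < 0) : hsymmList (R := R) l m = 0 := by
  induction l generalizing m with
  | nil => simp [hsymmList, hm.ne]
  | cons y ys ih => exact Finset.sum_eq_zero fun j _ => by rw [ih (by omega), mul_zero]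

theorem hsymmList_cons_eq_sum_range (y : α) (ys : List α) {m : ℤ} {M : ℕ} (hM : m.toNat < M) :
    hsymmList (R := R) (y :: ys) m = ∑ j ∈ Finset.range M, X y ^ j * hsymmList ys (m - j) := by
  refine Finset.sum_subset (Finset.range_subset_range.mpr (by omega)) fun j _ hj => ?_
  rw [hsymmList_of_neg _ (by simp at hj; omega), mul_zero]

theorem hsymmList_cons (y : α) (ys : List α) (m : ℤ) :
    hsymmList (R := R) (y :: ys) m = X y * hsymmList (y :: ys) (m - 1) + hsymmList ys m := by
  rw [hsymmList_cons_eq_sum_range y ys (M := m.toNat + 1 + 1) (by omega),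
    hsymmList_cons_eq_sum_range y ys (m := m - 1) (M := m.toNat + 1) (by omega),
    Finset.sum_range_succ', Finset.mul_sum]
  congr 1
  · refine Finset.sum_congr rfl fun j _ => ?_
    rw [pow_succ', mul_assoc, Nat.cast_succ, sub_add_eq_sub_sub_swap]
  · simp

theorem hsymmList_cons_cons_comm (x w : α) (ys : List α) (m : ℤ) :
    hsymmList (R := R) (x :: w :: ys) m = hsymmList (w :: x :: ys) m := by
  have expand : ∀ y z : α, hsymmList (R := R) (y :: z :: ys) m =
      ∑ j ∈ Finset.range (m.toNat + 1), ∑ k ∈ Finset.range (m.toNat + 1),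
        X y ^ j * X z ^ k * hsymmList ys (m - j - k) := by
    intro y z
    refine Finset.sum_congr rfl fun j _ => ?_
    rw [hsymmList_cons_eq_sum_range z ys (m := m - j) (M := m.toNat + 1) (by omega),
      Finset.mul_sum]
    simp only [mul_assoc]
  rw [expand, expand, Finset.sum_comm]
  refine Finset.sum_congr rfl fun j _ => Finset.sum_congr rfl fun k _ => ?_
  rw [mul_comm (X x ^ k), sub_right_comm]

theorem hsymmList_cons_cons (x w : α) (ys : List α) (m : ℤ) :
    hsymmList (R := R) (x :: w :: ys) m =
      X w * hsymmList (x :: w :: ys) (m - 1) + hsymmList (x :: ys) m := by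
  rw [hsymmList_cons_cons_comm, hsymmList_cons, hsymmList_cons_cons_comm]

theorem hsymmList_zero (l : List α) : hsymmList (R := R) l 0 = 1 := by
  induction l with
  | nil => simp [hsymmList]
  | cons y ys ih => rw [hsymmList_cons, hsymmList_of_neg _ (by omega), mul_zero, zero_add, ih]

theorem hsymmList_singleton (y : α) (n : ℕ) : hsymmList (R := R) [y] n = X y ^ n := by
  induction n with
  | zero => exact hsymmList_zero _
  | succ n ih =>
    rw [hsymmList_cons, Nat.cast_succ, add_sub_cancel_right, ih, pow_succ', hsymmList,
      if_neg (by omega), add_zero]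

theorem rename_hsymmList (f : α → β) (l : List α) (m : ℤ) :
    rename f (hsymmList (R := R) l m) = hsymmList (l.map f) m := by
  induction l generalizing m with
  | nil => simp only [hsymmList, List.map_nil]; split <;> simp
  | cons y ys ih => simp only [hsymmList, List.map_cons, map_sum, map_mul, map_pow, rename_X, ih]

theorem rename_swap_hsymmList_of_notMem [DecidableEq α] {x w : α} {l : List α} (hx : x ∉ l)
    (hw : w ∉ l) (m : ℤ) : rename (Equiv.swap x w) (hsymmList (R := R) l m) = hsymmList l m := by
  rw [rename_hsymmList, List.map_congr_left fun y hy =>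
    Equiv.swap_apply_of_ne_of_ne (ne_of_mem_of_not_mem hy hx) (ne_of_mem_of_not_mem hy hw),
    List.map_id']

theorem hsymmList_finRange (k n : ℕ) :
    hsymmList (R := R) (List.finRange k) n = hsymm (Fin k) R n := by
  induction k generalizing n with
  | zero =>
    cases n with
    | zero => rw [Nat.cast_zero, hsymmList_zero, hsymm_zero]
    | succ n =>
      rw [List.finRange_zero, hsymmList, if_neg (by omega)]
      simp [hsymm]
  | succ k ihk =>
    induction n with
    | zero => rw [Nat.cast_zero, hsymmList_zero, hsymm_zero]
    | succ n ihn =>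
      rw [List.finRange_succ, hsymmList_cons, ← List.finRange_succ, Nat.cast_succ,
        add_sub_cancel_right, ihn, ← rename_hsymmList, ← Nat.cast_succ, ihk,
        hsymm_fin_succ_succ]

end CommSemiring

theorem hsymmList_sub_rename_swap [CommRing R] [DecidableEq α] {x w : α} {ys : List α}
    (hx : x ∉ ys) (hw : w ∉ ys) (m : ℤ) :
    hsymmList (R := R) (x :: ys) m - rename (Equiv.swap x w) (hsymmList (x :: ys) m) =
      (X x - X w) * hsymmList (x :: w :: ys) (m - 1) := by
  induction m using Int.induction_on with
  | zero => rw [hsymmList_zero, map_one, sub_self, hsymmList_of_neg _ (by omega), mul_zero]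
  | succ n ih =>
    rw [hsymmList_cons x ys, map_add, map_mul, rename_X, Equiv.swap_apply_left,
      add_sub_cancel_right, rename_swap_hsymmList_of_notMem hx hw, hsymmList_cons_cons x w ys n]
    linear_combination X w * ih
  | pred n _ =>
    rw [hsymmList_of_neg _ (by omega), hsymmList_of_neg _ (by omega), map_zero, sub_zero,
      mul_zero]

end MvPolynomial

theorem List.filter_ne_zero_finRange_succ (n : ℕ) :
    (List.finRange (n + 1)).filter (· ≠ 0) = (List.finRange n).map Fin.succ := by
  rw [List.finRange_succ, List.filter_cons_of_neg (by simp), List.filter_eq_self]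
  simp +contextual

theorem Finset.sum_range_neg_one_pow_mul_reflect {R : Type*} [CommRing R] (b : ℕ) (c : ℤ)
    (e : ℕ → R) (G : ℤ → R) (he : ∀ l, b < l → e l = 0) (hG : ∀ m < 0, G m = 0) :
    ∑ l ∈ range (b + 1), (-1) ^ l * e (b - l) * G (l + c) =
      (-1) ^ b * ∑ l ∈ range (b + 1 + c).toNat, (-1) ^ l * e l * G (b + c - l) := by
  calc ∑ l ∈ range (b + 1), (-1) ^ l * e (b - l) * G (l + c)
      = (-1) ^ b * ∑ l ∈ range (b + 1), (-1) ^ l * e l * G (b + c - l) := by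
        rw [← sum_range_reflect, mul_sum]
        refine sum_congr rfl fun l hl => ?_
        have hlb : l ≤ b := Nat.lt_succ_iff.mp (mem_range.mp hl)
        have hsign : (-1 : R) ^ (b - l) = (-1) ^ b * (-1) ^ l := by
          rw [← pow_add, show b + l = b - l + 2 * l by omega, pow_add, pow_mul]
          simp
        rw [Nat.add_sub_cancel, Nat.sub_sub_self hlb, hsign, Nat.cast_sub hlb]
        ring_nf
    _ = (-1) ^ b * ∑ l ∈ range (b + 1 + c).toNat, (-1) ^ l * e l * G (b + c - l) := by
        congr 1
        have hsub := range_subset_range.mpr (Nat.le_add_right (b + 1) (b + 1 + c).toNat)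
        have hsub' := range_subset_range.mpr (Nat.le_add_left (b + 1 + c).toNat (b + 1))
        refine (sum_subset hsub fun l _ hl => ?_).trans (sum_subset hsub' fun l _ hl => ?_).symm
        · rw [he l (by simp at hl; omega), mul_zero, zero_mul]
        · rw [hG _ (by simp at hl; omega), mul_zero]

theorem swapVars_algebraMap (v w : σ) (f : MvPolynomial σ ℚ) :
    swapVars v w (algebraMap _ (FractionRing (MvPolynomial σ ℚ)) f) =
      algebraMap _ _ (rename (Equiv.swap v w) f) := by
  simp [swapVars]

theorem divDiff_algebraMap_of_sub_eq_mul {v w : σ} (hvw : v ≠ w) {f g : MvPolynomial σ ℚ}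
    (h : f - rename (Equiv.swap v w) f = (X v - X w) * g) :
    divDiff v w (algebraMap _ _ f) = algebraMap _ (FractionRing (MvPolynomial σ ℚ)) g := by
  have hne : algebraMap (MvPolynomial σ ℚ) (FractionRing (MvPolynomial σ ℚ)) (X v - X w) ≠ 0 :=
    fun h0 => sub_ne_zero.mpr ((X_injective (R := ℚ)).ne hvw)
      (IsFractionRing.to_map_eq_zero_iff.mp h0)
  rw [divDiff, swapVars_algebraMap, ← map_sub, h, map_mul, mul_div_cancel_left₀ _ hne]

theorem divDiff_sum {ι : Type*} (v w : σ) (s : Finset ι)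
    (F : ι → FractionRing (MvPolynomial σ ℚ)) :
    divDiff v w (∑ i ∈ s, F i) = ∑ i ∈ s, divDiff v w (F i) := by
  simp only [divDiff, map_sum, ← Finset.sum_sub_distrib, Finset.sum_div]

theorem foldr_divDiff_sum {ι : Type*} (v : σ) (L : List σ) (s : Finset ι)
    (F : ι → FractionRing (MvPolynomial σ ℚ)) :
    L.foldr (fun w acc => divDiff v w acc) (∑ i ∈ s, F i) =
      ∑ i ∈ s, L.foldr (fun w acc => divDiff v w acc) (F i) := by
  induction L with
  | nil => rfl
  | cons w L ih => simp only [List.foldr_cons, ih, divDiff_sum]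

theorem foldr_divDiff_mul_pow {x : σ} {L : List σ} (hnd : (x :: L).Nodup)
    {q : MvPolynomial σ ℚ} (hq : ∀ w ∈ L, rename (Equiv.swap x w) q = q) (N : ℕ) :
    L.foldr (fun w acc => divDiff x w acc)
        (algebraMap _ (FractionRing (MvPolynomial σ ℚ)) (q * X x ^ N)) =
      algebraMap _ _ (q * hsymmList (x :: L) (N - L.length)) := by
  induction L with
  | nil => simp [hsymmList_singleton]
  | cons w L ih =>
    obtain ⟨⟨hxw, hxL⟩, hwL, hndL⟩ : (x ≠ w ∧ x ∉ L) ∧ w ∉ L ∧ L.Nodup := by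
      simpa [List.nodup_cons, not_or] using hnd
    rw [List.foldr_cons, ih (List.nodup_cons.mpr ⟨hxL, hndL⟩) fun w hw => hq w (by simp [hw]),
      divDiff_algebraMap_of_sub_eq_mul hxw (g := q * hsymmList (x :: w :: L) (N - L.length - 1))]
    · rw [List.length_cons, Nat.cast_succ, sub_add_eq_sub_sub]
    · rw [map_mul, hq w List.mem_cons_self, ← mul_sub, hsymmList_sub_rename_swap hxL hwL]
      ring

theorem bubbleImage_eq_mul_sum_hsymmList (a b r : ℕ) (ha : 0 < a)
    (p : MvPolynomial (BubbleVars a b) ℚ)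
    (hp : ∀ i j : Fin a, rename (Equiv.swap (Sum.inr i : BubbleVars a b) (Sum.inr j)) p = p) :
    bubbleImage a b r ha p =
      algebraMap _ _ (p * ∑ l ∈ Finset.range (b + 1),
        (-1) ^ l * rename Sum.inl (esymm (Fin b) ℚ (b - l)) *
          rename Sum.inr (hsymmList (R := ℚ) (List.finRange a) (l + ((r : ℤ) + 1 - a)))) := by
  obtain ⟨n, rfl⟩ : ∃ n, a = n + 1 := ⟨a - 1, by omega⟩
  have hfilter : (List.finRange (n + 1)).filter (fun i => i ≠ (⟨0, ha⟩ : Fin (n + 1))) =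
      (List.finRange n).map Fin.succ := List.filter_ne_zero_finRange_succ n
  rw [bubbleImage, hfilter, ← List.foldr_map (f := Sum.inr), map_sum, foldr_divDiff_sum,
    Finset.mul_sum, map_sum]
  set x : BubbleVars (n + 1) b := Sum.inr ⟨0, ha⟩
  set vs : List (BubbleVars (n + 1) b) := ((List.finRange n).map Fin.succ).map Sum.inr
  have hvars : x :: vs = (List.finRange (n + 1)).map Sum.inr := by
    rw [List.finRange_succ, List.map_cons]
    rfl
  have hnodup : (x :: vs).Nodup := hvars ▸ (List.nodup_finRange _).map Sum.inr_injective
  refine Finset.sum_congr rfl fun l _ => ?_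
  have hq : ∀ w ∈ vs,
      rename (Equiv.swap x w) ((-1) ^ l * rename Sum.inl (esymm (Fin b) ℚ (b - l)) * p) =
        (-1) ^ l * rename Sum.inl (esymm (Fin b) ℚ (b - l)) * p := by
    intro w hw
    obtain ⟨i, -, rfl⟩ := List.mem_map.mp hw
    have hinl : ⇑(Equiv.swap x (Sum.inr i)) ∘ Sum.inl = Sum.inl :=
      funext fun t => Equiv.swap_apply_of_ne_of_ne (by simp [x]) (by simp)
    simp only [map_mul, map_pow, map_neg, map_one, rename_rename, hinl, x, hp]
  rw [mul_right_comm _ (X x ^ (l + r)), foldr_divDiff_mul_pow hnodup hq, hvars,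
    ← rename_hsymmList, List.length_map, List.length_map, List.length_finRange,
    show ((l + r : ℕ) : ℤ) - n = l + ((r : ℤ) + 1 - (n + 1 : ℕ)) by push_cast; ring]
  congr 1
  ring

theorem bubbleImage_eq_mul_sum (a b r : ℕ) (ha : 0 < a)
    (p : MvPolynomial (BubbleVars a b) ℚ)
    (hp : ∀ i j : Fin a, rename (Equiv.swap (Sum.inr i : BubbleVars a b) (Sum.inr j)) p = p) :
    bubbleImage a b r ha p =
      algebraMap _ _ (p * (-1) ^ b * ∑ l ∈ Finset.range (b + r + 2 - a),
        (-1) ^ l * rename Sum.inl (esymm (Fin b) ℚ l) *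
          rename Sum.inr (hsymm (Fin a) ℚ (b + r + 1 - a - l))) := by
  have hdeg : ∀ l ∈ Finset.range (b + r + 2 - a),
      hsymmList (List.finRange a) ((b : ℤ) + (r + 1 - a) - l) =
        hsymm (Fin a) ℚ (b + r + 1 - a - l) := fun l hl => by
    rw [Finset.mem_range] at hl
    rw [← hsymmList_finRange]
    congr 1
    omega
  rw [bubbleImage_eq_mul_sum_hsymmList a b r ha p hp,
    Finset.sum_range_neg_one_pow_mul_reflect b _ (fun k => rename Sum.inl (esymm (Fin b) ℚ k))
      (fun m => rename Sum.inr (hsymmList (List.finRange a) m))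
      (fun l hl => by rw [esymm_eq_zero_of_card_lt_s17 (by simpa using hl), map_zero])
      (fun m hm => by rw [hsymmList_of_neg _ hm, map_zero]),
    show ((b : ℤ) + 1 + (r + 1 - a)).toNat = b + r + 2 - a by omega, mul_assoc,
    Finset.sum_congr rfl fun l hl => by rw [hdeg l hl]]

/-- For a polynomial `p(t̲,u̲)` symmetric in `t̲` and in `u̲` separately, the image of the
`r`-dotted clockwise bubble acts as multiplication by
`(-1)^b ∑_{l=0}^{b-a+r+1} (-1)^l e_l(t̲) h_{b-a+r+1-l}(u̲)`; in particular it is zero when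
`r < a-b-1`, and it is `(-1)^b` times the identity when `r = a-b-1`. -/
theorem bubbleImage_eq (a b r : ℕ) (ha : 0 < a)
    (p : MvPolynomial (BubbleVars a b) ℚ)
    (hp : ∀ (g : Equiv.Perm (Fin b)) (h : Equiv.Perm (Fin a)),
      rename (Equiv.sumCongr g h) p = p) :
    bubbleImage a b r ha p =
      algebraMap (MvPolynomial (BubbleVars a b) ℚ)
        (FractionRing (MvPolynomial (BubbleVars a b) ℚ))
        (p * (-1 : MvPolynomial (BubbleVars a b) ℚ) ^ b *
          ∑ l ∈ Finset.range (b + r + 2 - a),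
            (-1 : MvPolynomial (BubbleVars a b) ℚ) ^ l *
              rename Sum.inl (esymm (Fin b) ℚ l) *
              rename Sum.inr (hsymm (Fin a) ℚ (b + r + 1 - a - l))) ∧
    (b + r + 2 ≤ a → bubbleImage a b r ha p = 0) ∧
    (a = b + r + 1 →
      bubbleImage a b r ha p =
        algebraMap (MvPolynomial (BubbleVars a b) ℚ)
          (FractionRing (MvPolynomial (BubbleVars a b) ℚ))
          ((-1 : MvPolynomial (BubbleVars a b) ℚ) ^ b * p)) := by
  have hmain := bubbleImage_eq_mul_sum a b r ha p fun i j => by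
    simpa using hp (Equiv.refl _) (Equiv.swap i j)
  refine ⟨hmain, fun hle => ?_, fun heq => ?_⟩
  · rw [hmain, show b + r + 2 - a = 0 by omega]
    simp
  · rw [hmain, show b + r + 2 - a = 1 by omega, Finset.sum_range_one,
      show b + r + 1 - a - 0 = 0 by omega, hsymm_zero, esymm_zero]
    simp [mul_comm]
end
end

section
/- For partitions α, β contained in the (a × b)-rectangle region Γ(a,b) (i.e. α_j ≤ b for j > a), the supersymmetric Schur polynomials multiply according to the Littlewood-Richardson rule: π_α(x,y) π_β(x,y) = ∑_γ c_{αβ}^γ π_γ(x,y), where c_{αβ}^γ are the Littlewood-Richardson coefficients. -/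
/-!
The ordinary Schur polynomial `s_α` and `π_α` are images of one universal Jacobi–Trudi determinant
in `ℚ[h₁, h₂, …]` (`MvPolynomial ℕ ℚ`, with `X t` standing for `h_{t+1}`), under
`h_k ↦ h_k(x₁, …, x_N)` and `h_k ↦ e_k(x, y)` respectively. So it suffices to lift the
Littlewood–Richardson identity from all the ordinary specializations to the universal ring, i.e.
to show that a polynomial killed by every `h_k ↦ h_k(x₁, …, x_N)` is zero. The relation
`∑ (-1)^i e_i h_{k-i} = 0` gives an involution `ω` of the universal ring turning these
specializations into `h_k ↦ e_k(x₁, …, x_N)`, which are jointly injective by the algebraic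
independence of the elementary symmetric polynomials.
-/

open MvPolynomial

noncomputable section

/-- `h_k(x)` for an integer index, with value `0` for `k < 0`. -/
noncomputable def hInt (N : ℕ) (k : ℤ) : MvPolynomial (Fin N) ℚ :=
  if k < 0 then 0 else hsymm (Fin N) ℚ k.toNat

/-- The ordinary Schur polynomial `s_γ(x_1,…,x_N) = det(h_{γ_i+j-i})` (Jacobi–Trudi). -/
noncomputable def ordSchur (N m : ℕ) (γ : Fin m → ℕ) : MvPolynomial (Fin N) ℚ :=
  Matrix.det (Matrix.of fun i j : Fin m => hInt N ((γ i : ℤ) + (j : ℤ) - (i : ℤ)))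

/-- The finite set of partitions of `s` with at most `m` parts. -/
def partFinset (m s : ℕ) : Finset (Fin m → ℕ) :=
  ((Finset.univ : Finset (Fin m → Fin (s + 1))).image fun f j => (f j : ℕ)).filter
    fun γ => Antitone γ ∧ ∑ i, γ i = s

open Finset

section SignReversingInvolution

variable {σ : Type*} {j : σ} {p : Finset σ × Multiset σ}

def pivot (s : Multiset σ) (hs : s ≠ 0) : σ := (Multiset.exists_mem_of_ne_zero hs).choose

lemma pivot_mem {s : Multiset σ} (hs : s ≠ 0) : pivot s hs ∈ s :=
  (Multiset.exists_mem_of_ne_zero hs).choose_spec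

lemma pivot_congr {s t : Multiset σ} (hs : s ≠ 0) (ht : t ≠ 0) (e : s = t) :
    pivot s hs = pivot t ht := by
  subst e; rfl

variable [DecidableEq σ]

def toggle (j : σ) (p : Finset σ × Multiset σ) : Finset σ × Multiset σ :=
  if j ∈ p.1 then (p.1.erase j, j ::ₘ p.2) else (insert j p.1, p.2.erase j)

lemma toggle_of_mem (h : j ∈ p.1) : toggle j p = (p.1.erase j, j ::ₘ p.2) := if_pos h

lemma toggle_of_notMem (h : j ∉ p.1) : toggle j p = (insert j p.1, p.2.erase j) := if_neg h

lemma toggle_val_add (hj : j ∈ p.1.val + p.2) :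
    (toggle j p).1.val + (toggle j p).2 = p.1.val + p.2 := by
  by_cases h : j ∈ p.1
  · rw [toggle_of_mem h, erase_val, Multiset.add_cons, ← Multiset.cons_add,
      Multiset.cons_erase h]
  · rw [toggle_of_notMem h, insert_val_of_notMem h, Multiset.cons_add, ← Multiset.add_cons,
      Multiset.cons_erase ((Multiset.mem_add.1 hj).resolve_left h)]

lemma toggle_toggle (hj : j ∈ p.1.val + p.2) : toggle j (toggle j p) = p := by
  by_cases h : j ∈ p.1
  · rw [toggle_of_mem h, toggle_of_notMem (notMem_erase j p.1), insert_erase h,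
      Multiset.erase_cons_head]
  · rw [toggle_of_notMem h, toggle_of_mem (mem_insert_self j p.1), erase_insert h,
      Multiset.cons_erase ((Multiset.mem_add.1 hj).resolve_left h)]

lemma neg_one_pow_card_toggle_fst {R : Type*} [Ring R] :
    (-1 : R) ^ #(toggle j p).1 = -(-1) ^ #p.1 := by
  by_cases h : j ∈ p.1
  · rw [toggle_of_mem h, ← card_erase_add_one h, pow_succ, mul_neg_one, neg_neg]
  · rw [toggle_of_notMem h, card_insert_of_notMem h, pow_succ, mul_neg_one]

lemma toggle_ne : toggle j p ≠ p := fun h => by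
  have := congrArg (fun q => #q.1) h
  by_cases hj : j ∈ p.1
  · simp only [toggle_of_mem hj, card_erase_of_mem hj] at this
    have := card_pos.2 ⟨j, hj⟩
    omega
  · simp only [toggle_of_notMem hj, card_insert_of_notMem hj] at this
    omega

end SignReversingInvolution

section ElementaryComplete

variable (σ : Type*) [Fintype σ] [DecidableEq σ] (R : Type*) [CommRing R]

def signedPairs (k : ℕ) : Finset (Finset σ × Multiset σ) :=
  (range (k + 1)).biUnion fun i =>
    powersetCard i univ ×ˢ (univ : Finset (Sym σ (k - i))).image Sym.toMultiset

variable {σ}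

lemma mem_signedPairs {k : ℕ} {p : Finset σ × Multiset σ} :
    p ∈ signedPairs σ k ↔ #p.1 + Multiset.card p.2 = k := by
  simp only [signedPairs, mem_biUnion, mem_range, mem_product, mem_powersetCard_univ,
    mem_image, mem_univ, true_and]
  constructor
  · rintro ⟨i, hi, rfl, s, hs⟩
    rw [← hs, Sym.card_coe]
    omega
  · intro h
    exact ⟨#p.1, by omega, rfl, ⟨p.2, by omega⟩, rfl⟩

lemma sum_signedPairs (k : ℕ) :
    ∑ p ∈ signedPairs σ k, (-1 : MvPolynomial σ R) ^ #p.1 * ((p.1.val + p.2).map X).prod =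
      ∑ i ∈ range (k + 1), (-1) ^ i * esymm σ R i * hsymm σ R (k - i) := by
  have hdisj : (range (k + 1) : Set ℕ).PairwiseDisjoint fun i =>
      powersetCard i (univ : Finset σ) ×ˢ (univ : Finset (Sym σ (k - i))).image Sym.toMultiset :=
    fun i _ i' _ hii' => disjoint_left.2 fun p hp hp' => hii' <| by
      rw [mem_product, mem_powersetCard_univ] at hp hp'
      rw [← hp.1, ← hp'.1]
  rw [signedPairs, sum_biUnion hdisj]
  refine sum_congr rfl fun i _ => ?_
  rw [sum_product, esymm, hsymm, mul_assoc, sum_mul_sum, mul_sum]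
  refine sum_congr rfl fun A hA => ?_
  rw [mem_powersetCard_univ] at hA
  rw [sum_image fun s _ t _ hst => Sym.coe_injective hst, mul_sum]
  refine sum_congr rfl fun s _ => ?_
  rw [hA, Multiset.map_add, Multiset.prod_add, prod_eq_multiset_prod]
  rfl

variable {R} in
/-- Sign-reversing involution on the terms `(A, M)` of the expansion: move a chosen element of
`A + M` between the set `A` and the multiset `M`. -/
theorem sum_range_neg_one_pow_mul_esymm_mul_hsymm {k : ℕ} (hk : k ≠ 0) :
    ∑ i ∈ range (k + 1), (-1 : MvPolynomial σ R) ^ i * esymm σ R i * hsymm σ R (k - i) = 0 := by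
  rw [← sum_signedPairs]
  have hne : ∀ p ∈ signedPairs σ k, p.1.val + p.2 ≠ 0 := fun p hp h0 => by
    have := congrArg Multiset.card h0
    rw [Multiset.card_add, ← card_def, Multiset.card_zero, mem_signedPairs.1 hp] at this
    exact hk this
  refine sum_involution (fun p hp => toggle (pivot _ (hne p hp)) p) (fun p hp => ?_)
    (fun p hp _ => toggle_ne) (fun p hp => ?_) (fun p hp => ?_)
  · rw [toggle_val_add (pivot_mem _), neg_one_pow_card_toggle_fst, neg_mul, add_neg_cancel]
  · rw [mem_signedPairs, card_def, ← Multiset.card_add, toggle_val_add (pivot_mem _),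
      Multiset.card_add, ← card_def, mem_signedPairs.1 hp]
  · have hsum := toggle_val_add (pivot_mem (hne p hp))
    rw [pivot_congr _ (hne p hp) hsum, toggle_toggle (pivot_mem _)]

end ElementaryComplete

section AltInverse

variable {S : Type*} [CommRing S] {u v : ℕ → S}

/-- `u` and `v` are alternating inverses: `(∑ (-1)^i u_i t^i) (∑ v_j t^j) = 1`. -/
structure IsAltInverse (u v : ℕ → S) : Prop where
  left_zero : u 0 = 1
  right_zero : v 0 = 1
  sum_eq_zero : ∀ k, k ≠ 0 → ∑ i ∈ range (k + 1), (-1) ^ i * u i * v (k - i) = 0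

lemma IsAltInverse.symm (h : IsAltInverse u v) : IsAltInverse v u where
  left_zero := h.right_zero
  right_zero := h.left_zero
  sum_eq_zero k hk := by
    rw [← sum_range_reflect, ← mul_zero ((-1 : S) ^ k), ← h.sum_eq_zero k hk, mul_sum]
    refine sum_congr rfl fun i hi => ?_
    have hik : i ≤ k := Nat.lt_succ_iff.1 (mem_range.1 hi)
    have hsign : (-1 : S) ^ k = (-1) ^ (k - i) * (-1) ^ i := by
      rw [← pow_add, Nat.sub_add_cancel hik]
    have hsq : (-1 : S) ^ i * (-1) ^ i = 1 := by
      rw [← mul_pow, neg_one_mul, neg_neg, one_pow]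
    rw [Nat.add_sub_cancel, Nat.sub_sub_self hik, hsign]
    linear_combination -((-1 : S) ^ (k - i) * v (k - i) * u i) * hsq

lemma IsAltInverse.succ_eq (h : IsAltInverse u v) (k : ℕ) :
    v (k + 1) = ∑ i ∈ range (k + 1), (-1) ^ i * u (i + 1) * v (k - i) := by
  have hk := h.sum_eq_zero (k + 1) k.succ_ne_zero
  rw [sum_range_succ', h.left_zero] at hk
  simp only [pow_succ, Nat.add_sub_add_right, Nat.sub_zero, pow_zero, one_mul] at hk
  simp only [mul_neg_one, neg_mul, sum_neg_distrib] at hk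
  linear_combination hk

end AltInverse

section OmegaInvolution

variable (R : Type*) [CommRing R]

/-- With `X t` read as `u_{t+1}`, `altInvCoeff R j` is the universal formula for `v_j` when
`u, v` are alternating inverses; e.g. `h_j` as a polynomial in `e_1, e_2, …`, and also `e_j` in
the `h`'s. -/
def altInvCoeff : ℕ → MvPolynomial ℕ R
  | 0 => 1
  | k + 1 => ∑ i ∈ range (k + 1), (-1) ^ i * X i * altInvCoeff (k - i)
  decreasing_by exact Nat.lt_succ_of_le (Nat.sub_le k i)

/-- The involution `ω` of `R[h₁, h₂, …]` exchanging `h_k` and `e_k`. -/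
def omegaHom : MvPolynomial ℕ R →ₐ[R] MvPolynomial ℕ R :=
  aeval fun t => altInvCoeff R (t + 1)

variable {R} {S : Type*} [CommRing S] [Algebra R S] {u v : ℕ → S}

lemma IsAltInverse.aeval_altInvCoeff (h : IsAltInverse u v) (j : ℕ) :
    aeval (fun t => u (t + 1)) (altInvCoeff R j) = v j := by
  induction j using Nat.strong_induction_on with
  | _ j ih =>
    match j with
    | 0 => rw [altInvCoeff, map_one, h.right_zero]
    | k + 1 =>
      rw [altInvCoeff, h.succ_eq, map_sum]
      refine sum_congr rfl fun i hi => ?_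
      rw [map_mul, map_mul, map_pow, map_neg, map_one, aeval_X, ih (k - i) (by omega)]

lemma IsAltInverse.aeval_omegaHom (h : IsAltInverse u v) (Q : MvPolynomial ℕ R) :
    aeval (fun t => u (t + 1)) (omegaHom R Q) = aeval (fun t => v (t + 1)) Q := by
  rw [← AlgHom.comp_apply]
  congr 1
  exact algHom_ext fun t => by rw [AlgHom.comp_apply, omegaHom, aeval_X, aeval_X,
    h.aeval_altInvCoeff]

end OmegaInvolution

section Injectivity

variable {R : Type*} [CommRing R]

lemma isAltInverse_esymm_hsymm (σ : Type*) [Fintype σ] [DecidableEq σ] :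
    IsAltInverse (esymm σ R) (hsymm σ R) :=
  ⟨esymm_zero σ R, hsymm_zero σ R, fun _ hk => sum_range_neg_one_pow_mul_esymm_mul_hsymm hk⟩

/-- Algebraic independence of `e_1, …, e_n` in `n` variables. -/
lemma eq_zero_of_forall_aeval_esymm {Q : MvPolynomial ℕ R}
    (h : ∀ N, aeval (fun t => esymm (Fin N) R (t + 1)) Q = 0) : Q = 0 := by
  obtain ⟨n, hn⟩ : ∃ n, ↑Q.vars ⊆ Set.range (Fin.val : Fin n → ℕ) :=
    ⟨Q.vars.sup id + 1, fun t ht =>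
      ⟨⟨t, Nat.lt_succ_of_le (le_sup (f := id) (mem_coe.1 ht))⟩, rfl⟩⟩
  obtain ⟨Q', rfl⟩ := exists_rename_eq_of_vars_subset_range Q Fin.val Fin.val_injective hn
  have hQ' : esymmAlgHom (Fin n) R n Q' = 0 := by
    rw [← Subalgebra.coe_eq_zero, esymmAlgHom_apply, ← h n, aeval_rename]
    rfl
  rw [esymmAlgHom_fin_injective R le_rfl (hQ'.trans (map_zero _).symm), map_zero]

lemma omegaHom_omegaHom (Q : MvPolynomial ℕ R) : omegaHom R (omegaHom R Q) = Q := by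
  refine sub_eq_zero.1 (eq_zero_of_forall_aeval_esymm fun N => ?_)
  classical
  have h := isAltInverse_esymm_hsymm (R := R) (Fin N)
  rw [map_sub, h.aeval_omegaHom, h.symm.aeval_omegaHom, sub_self]

lemma eq_zero_of_forall_aeval_hsymm {Q : MvPolynomial ℕ R}
    (h : ∀ N, aeval (fun t => hsymm (Fin N) R (t + 1)) Q = 0) : Q = 0 := by
  have hω : omegaHom R Q = 0 := eq_zero_of_forall_aeval_esymm fun N => by
    rw [(isAltInverse_esymm_hsymm (Fin N)).aeval_omegaHom, h N]
  rw [← omegaHom_omegaHom Q, hω, map_zero]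

end Injectivity

section JacobiTrudi

variable {S T : Type*} [CommRing S] [CommRing T]

def extendByZero (s : ℕ → S) (k : ℤ) : S := if k < 0 then 0 else s k.toNat

def jacobiTrudi (E : ℤ → S) {m : ℕ} (γ : Fin m → ℕ) : S :=
  (Matrix.of fun i j : Fin m => E ((γ i : ℤ) + (j : ℤ) - (i : ℤ))).det

lemma RingHom.map_jacobiTrudi (f : S →+* T) (E : ℤ → S) {m : ℕ} (γ : Fin m → ℕ) :
    f (jacobiTrudi E γ) = jacobiTrudi (f ∘ E) γ :=
  f.map_det _

lemma ordSchur_eq_jacobiTrudi (N m : ℕ) (γ : Fin m → ℕ) :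
    ordSchur N m γ = jacobiTrudi (extendByZero (hsymm (Fin N) ℚ)) γ :=
  rfl

lemma supSchur_eq_jacobiTrudi (a b m : ℕ) (γ : Fin m → ℕ) :
    supSchur a b m γ = jacobiTrudi (extendByZero (superElem a b)) γ :=
  rfl

lemma superElem_zero (a b : ℕ) : superElem a b 0 = 1 := by
  simp [superElem, hsymm_zero, esymm_zero]

variable (R : Type*) [CommRing R]

def univSeq : ℕ → MvPolynomial ℕ R
  | 0 => 1
  | n + 1 => X n

variable {R} [Algebra R S]

lemma aeval_univSeq {s : ℕ → S} (hs : s 0 = 1) (n : ℕ) :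
    aeval (fun t => s (t + 1)) (univSeq R n) = s n := by
  cases n with
  | zero => rw [univSeq, map_one, hs]
  | succ n => rw [univSeq, aeval_X]

lemma aeval_jacobiTrudi_univSeq {s : ℕ → S} (hs : s 0 = 1) {m : ℕ} (γ : Fin m → ℕ) :
    aeval (fun t => s (t + 1)) (jacobiTrudi (extendByZero (univSeq R)) γ) =
      jacobiTrudi (extendByZero s) γ := by
  rw [← AlgHom.coe_toRingHom, RingHom.map_jacobiTrudi]
  congr 1
  funext k
  simp only [Function.comp_apply, extendByZero, AlgHom.coe_toRingHom]
  split_ifs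
  · exact map_zero _
  · exact aeval_univSeq hs _

end JacobiTrudi

theorem supSchur_littlewood_richardson_general (a b mα mβ : ℕ)
    (α : Fin mα → ℕ) (β : Fin mβ → ℕ)
    (c : (Fin (mα + mβ) → ℕ) → ℚ)
    (hc : ∀ N : ℕ,
      ordSchur N mα α * ordSchur N mβ β =
        ∑ γ ∈ partFinset (mα + mβ) (∑ i, α i + ∑ i, β i),
          MvPolynomial.C (c γ) * ordSchur N (mα + mβ) γ) :
    supSchur a b mα α * supSchur a b mβ β =
      ∑ γ ∈ partFinset (mα + mβ) (∑ i, α i + ∑ i, β i),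
        MvPolynomial.C (c γ) * supSchur a b (mα + mβ) γ := by
  set F := partFinset (mα + mβ) (∑ i, α i + ∑ i, β i)
  let J {m : ℕ} : (Fin m → ℕ) → MvPolynomial ℕ ℚ := jacobiTrudi (extendByZero (univSeq ℚ))
  let JE {τ : Type} (s : ℕ → MvPolynomial τ ℚ) {m : ℕ} : (Fin m → ℕ) → MvPolynomial τ ℚ :=
    jacobiTrudi (extendByZero s)
  have hspec {τ : Type} (s : ℕ → MvPolynomial τ ℚ) (hs : s 0 = 1) :
      aeval (fun t => s (t + 1)) (J α * J β - ∑ γ ∈ F, C (c γ) * J γ) =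
        JE s α * JE s β - ∑ γ ∈ F, C (c γ) * JE s γ := by
    simp only [J, JE, map_sub, map_mul, map_sum, algHom_C, algebraMap_eq,
      aeval_jacobiTrudi_univSeq hs]
  have huniv : J α * J β - ∑ γ ∈ F, C (c γ) * J γ = 0 :=
    eq_zero_of_forall_aeval_hsymm fun N => by
      rw [hspec _ (hsymm_zero _ _)]
      simp only [JE, ← ordSchur_eq_jacobiTrudi]
      exact sub_eq_zero.2 (hc N)
  have hsuper := hspec _ (superElem_zero a b)
  simp only [JE, ← supSchur_eq_jacobiTrudi] at hsuper
  rwa [huniv, map_zero, eq_comm, sub_eq_zero] at hsuper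

/-- For partitions `α, β` lying in `Γ(a,b)` (i.e. `α_j ≤ b` for `j > a`), the
supersymmetric Schur polynomials multiply according to the Littlewood–Richardson rule
`π_α π_β = ∑_γ c_{αβ}^γ π_γ`, where `c_{αβ}^γ` are the Littlewood–Richardson
coefficients, characterized as the structure constants of the ordinary Schur
polynomials (in any number of variables). -/
theorem supSchur_littlewood_richardson (a b mα mβ : ℕ)
    (α : Fin mα → ℕ) (β : Fin mβ → ℕ) (hα : Antitone α) (hβ : Antitone β)
    (hαΓ : ∀ j : Fin mα, a ≤ (j : ℕ) → α j ≤ b)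
    (hβΓ : ∀ j : Fin mβ, a ≤ (j : ℕ) → β j ≤ b)
    (c : (Fin (mα + mβ) → ℕ) → ℚ)
    (hc : ∀ N : ℕ,
      ordSchur N mα α * ordSchur N mβ β =
        ∑ γ ∈ partFinset (mα + mβ) (∑ i, α i + ∑ i, β i),
          MvPolynomial.C (c γ) * ordSchur N (mα + mβ) γ) :
    supSchur a b mα α * supSchur a b mβ β =
      ∑ γ ∈ partFinset (mα + mβ) (∑ i, α i + ∑ i, β i),
        MvPolynomial.C (c γ) * supSchur a b (mα + mβ) γ :=
  supSchur_littlewood_richardson_general a b mα mβ α β c hc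
end
end
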